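/- arXiv:1911.11628 — 6 statements merged into one kernel-verified Lean document; each statement's English description precedes it below -/
import Mathlib

section
/- Let f, g : ℝⁿ → ℝⁿ be C¹ vector fields and x₀ ∈ ℝⁿ. For each t > 0 let x^t denote the single-switch trajectory with data (f, g, t, x₀). Then, as t → 0⁺, x^t(2t) − x₀ = (f(x₀) + g(x₀)) t + ( D(f+g)(x₀)(f(x₀)+g(x₀)) + [f,g](x₀) ) t²/2 + o(t²), i.e. the function t ↦ x^t(2t) − x₀ − (f(x₀)+g(x₀))t − (D(f+g)(x₀)(f(x₀)+g(x₀)) + [f,g](x₀)) t²/2 is o(t²) as t → 0⁺. -/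
open Set Filter Metric Matrix MeasureTheory Asymptotics
open scoped RealInnerProductSpace ENNReal Topology

noncomputable section

/-- Euclidean `n`-space. -/
abbrev Euc (n : ℕ) : Type := EuclideanSpace ℝ (Fin n)

/-- The Lie bracket `[f,g](x) = Dg(x) f(x) - Df(x) g(x)`. -/
def lieBracket {n : ℕ} (f g : Euc n → Euc n) (x : Euc n) : Euc n :=
  fderiv ℝ g x (f x) - fderiv ℝ f x (g x)

/-- Second-order Hamiltonian `H_{f,g} u (x) = ∇(∇u·g)(x) · f(x)`. -/
def H2 {n : ℕ} (f g : Euc n → Euc n) (u : Euc n → ℝ) (x : Euc n) : ℝ :=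
  fderiv ℝ (fun y => ⟪gradient u y, g y⟫) x (f x)

/-- Single-switch trajectory with data `(f, g, t, x₀)`: Carathéodory solution following `f`
on `[0,t)` and `g` on `[t,2t]`, starting at `x₀`. -/
def IsSwitchTraj {n : ℕ} (f g : Euc n → Euc n) (t : ℝ) (x₀ : Euc n) (x : ℝ → Euc n) : Prop :=
  x 0 = x₀ ∧ ContinuousOn x (Icc 0 (2 * t)) ∧
    (∀ s ∈ Ioo (0 : ℝ) t, HasDerivAt x (f (x s)) s) ∧
    (∀ s ∈ Ioo t (2 * t), HasDerivAt x (g (x s)) s)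

/-- Piecewise continuity: on every bounded interval, continuity off a finite set. -/
def PiecewiseContinuous {m : ℕ} (a : ℝ → Euc m) : Prop :=
  ∀ T > (0 : ℝ), ∃ D : Finset ℝ, ∀ t ∈ Icc (0 : ℝ) T, t ∉ D → ContinuousAt a t

/-- Admissible control with values in the control set `A`. -/
def IsControl {m : ℕ} (A : Set (Euc m)) (a : ℝ → Euc m) : Prop :=
  (∀ s, a s ∈ A) ∧ PiecewiseContinuous a

/-- Carathéodory trajectory of the control system `ẋ = f(x,a)`. -/
def IsTraj {n m : ℕ} (f : Euc n → Euc m → Euc n) (A : Set (Euc m))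
    (a : ℝ → Euc m) (x : ℝ → Euc n) : Prop :=
  IsControl A a ∧ ContinuousOn x (Ici 0) ∧
    ∀ t : ℝ, 0 ≤ t → x t = x 0 + ∫ s in (0 : ℝ)..t, f (x s) (a s)

/-- Points from which the target `𝒯` can be reached within time `t`. -/
def ReachSet {n m : ℕ} (f : Euc n → Euc m → Euc n) (A : Set (Euc m)) (𝒯 : Set (Euc n))
    (t : ℝ) : Set (Euc n) :=
  {x₀ | ∃ (a : ℝ → Euc m) (x : ℝ → Euc n) (t' : ℝ),
    IsTraj f A a x ∧ x 0 = x₀ ∧ 0 ≤ t' ∧ t' ≤ t ∧ x t' ∈ 𝒯}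

/-- Minimum time function, valued in `ℝ≥0∞`. -/
def minTime {n m : ℕ} (f : Euc n → Euc m → Euc n) (A : Set (Euc m)) (𝒯 : Set (Euc n))
    (x₀ : Euc n) : ℝ≥0∞ :=
  sInf {θ : ℝ≥0∞ | ∃ (a : ℝ → Euc m) (x : ℝ → Euc n) (t : ℝ),
    IsTraj f A a x ∧ x 0 = x₀ ∧ 0 ≤ t ∧ x t ∈ 𝒯 ∧ θ = ENNReal.ofReal t}

/-- Small time local attainability of the target `𝒯` at `xbar`. -/
def STLA {n m : ℕ} (f : Euc n → Euc m → Euc n) (A : Set (Euc m)) (𝒯 : Set (Euc n))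
    (xbar : Euc n) : Prop :=
  ∀ t > (0 : ℝ), xbar ∈ interior (ReachSet f A 𝒯 t)

/-- `C^k` controlled vector field: `C^k` in `x` with spatial derivatives jointly continuous. -/
def VFieldC {n m : ℕ} (k : ℕ) (f : Euc n → Euc m → Euc n) : Prop :=
  (∀ a, ContDiff ℝ k fun x => f x a) ∧
    ∀ i ≤ k, Continuous fun p : Euc n × Euc m => iteratedFDeriv ℝ i (fun x => f x p.2) p.1

/-- The second-order controllability expression
`-D²u(x) f(x,a₁)·f(x,a₂) - (D(f(·,a₁)+f(·,a₂))(x)(f(x,a₁)+f(x,a₂)) + [f(·,a₁),f(·,a₂)](x))·∇u(x)`. -/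
def SOexpr {n m : ℕ} (f : Euc n → Euc m → Euc n) (u : Euc n → ℝ) (x : Euc n)
    (a₁ a₂ : Euc m) : ℝ :=
  -⟪fderiv ℝ (gradient u) x (f x a₁), f x a₂⟫ -
    ⟪gradient u x,
      fderiv ℝ (fun y => f y a₁ + f y a₂) x (f x a₁ + f x a₂) +
        lieBracket (fun y => f y a₁) (fun y => f y a₂) x⟫

/-- The target is reached with a piecewise constant control with at most one switch. -/
def ReachOneSwitch {n m : ℕ} (f : Euc n → Euc m → Euc n) (A : Set (Euc m)) (𝒯 : Set (Euc n))
    (x₀ : Euc n) : Prop :=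
  ∃ a₁ ∈ A, ∃ a₂ ∈ A, ∃ ts tf : ℝ, 0 ≤ ts ∧ ts ≤ tf ∧
    ∃ x : ℝ → Euc n, IsTraj f A (fun s => if s < ts then a₁ else a₂) x ∧ x 0 = x₀ ∧ x tf ∈ 𝒯

/-- The matrix `S(x) = D(∇u σ)(x) σ(x)`, i.e. `S_{ij}(x) = ∇(∇u·σᵢ)(x)·σⱼ(x)`. -/
def Smat {n m : ℕ} (σ : Fin m → Euc n → Euc n) (u : Euc n → ℝ) (x : Euc n) :
    Matrix (Fin m) (Fin m) ℝ :=
  Matrix.of fun i j => fderiv ℝ (fun y => ⟪gradient u y, σ i y⟫) x (σ j x)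

/-- The symmetric block matrix `K = [[S*, ᵗS],[S, S*]]` built from a square matrix `S`. -/
def Kof {m : ℕ} (S : Matrix (Fin m) (Fin m) ℝ) :
    Matrix (Fin m ⊕ Fin m) (Fin m ⊕ Fin m) ℝ :=
  Matrix.fromBlocks ((2 : ℝ)⁻¹ • (S + Sᵀ)) Sᵀ S ((2 : ℝ)⁻¹ • (S + Sᵀ))

/-- The matrix `K(x)` associated to `σ` and `u`. -/
def Kmat {n m : ℕ} (σ : Fin m → Euc n → Euc n) (u : Euc n → ℝ) (x : Euc n) :
    Matrix (Fin m ⊕ Fin m) (Fin m ⊕ Fin m) ℝ :=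
  Kof (Smat σ u x)

/-- Symmetric system vector field `f(x,a) = σ(x) a`. -/
def symF {n m : ℕ} (σ : Fin m → Euc n → Euc n) : Euc n → Euc m → Euc n :=
  fun x a => ∑ j, a j • σ j x

/-- Nonlinear affine system vector field `f(x,a) = σ₀(x) + σ(x) a`. -/
def affF {n m : ℕ} (σ₀ : Euc n → Euc n) (σ : Fin m → Euc n → Euc n) :
    Euc n → Euc m → Euc n :=
  fun x a => σ₀ x + ∑ j, a j • σ j x

end

/-
Along a solution of `ẋ = h x` starting at a point `x(a)` close to `x₀`, the remainder
`x(s) - x(a) - (s - a) h(x(a)) - (s - a)²/2 · Dh(x₀) h(x(a))` has derivative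
`h(x(s)) - h(x(a)) - Dh(x₀)(x(s) - x(a)) + Dh(x₀)(x(s) - x(a) - (s - a) h(x(a)))`.
Once a barrier argument keeps the solution in a ball on which `h` is `ε`-close to its
linearization (strict differentiability), this derivative is `O(ε t + t²)` on a leg of length `t`,
so by the mean value inequality the remainder of each leg is `o(t²)`, uniformly in its start.
Concatenating the legs, the only new second-order term is `t (g(x(t)) - g(x₀)) ≈ t² Dg(x₀) f(x₀)`,
and `Df f + 2 Dg f + Dg g = D(f+g)(f+g) + [f,g]`.
-/

section Flow

variable {E : Type*} [NormedAddCommGroup E] [NormedSpace ℝ E]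
  {h : E → E} {x : ℝ → E} {a b : ℝ} {x₀ : E} {r M : ℝ}

lemma norm_sub_le_of_norm_sub_sub_le {s : Set E} {A : E →L[ℝ] E} {ε : ℝ}
    (hA : ∀ u ∈ s, ∀ v ∈ s, ‖h u - h v - A (u - v)‖ ≤ ε * ‖u - v‖) :
    ∀ u ∈ s, ∀ v ∈ s, ‖h u - h v‖ ≤ (‖A‖ + ε) * ‖u - v‖ := fun u hu v hv =>
  calc ‖h u - h v‖ ≤ ‖h u - h v - A (u - v)‖ + ‖A (u - v)‖ := norm_le_norm_sub_add _ _
    _ ≤ ε * ‖u - v‖ + ‖A‖ * ‖u - v‖ := add_le_add (hA u hu v hv) (A.le_opNorm _)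
    _ = (‖A‖ + ε) * ‖u - v‖ := by ring

/-- `x` solves `ẋ = h x` on `[a, b]`, in the right-derivative form of the mean value
inequalities; the two legs of a switching trajectory are solutions in this sense. -/
def IsSolutionOn (h : E → E) (x : ℝ → E) (a b : ℝ) : Prop :=
  ContinuousOn x (Icc a b) ∧ ∀ s ∈ Ico a b, HasDerivWithinAt x (h (x s)) (Ici s) s

lemma IsSolutionOn.of_hasDerivAt (hh : Continuous h) (hx : ContinuousOn x (Icc a b))
    (hd : ∀ s ∈ Ioo a b, HasDerivAt x (h (x s)) s) : IsSolutionOn h x a b := by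
  refine ⟨hx, fun s hs => ?_⟩
  rcases eq_or_lt_of_le hs.1 with has | has
  · subst has
    have hab : a < b := hs.2
    have hcont : ContinuousWithinAt x (Ioo a b) a :=
      (hx a (left_mem_Icc.2 hab.le)).mono Ioo_subset_Icc_self
    refine hasDerivWithinAt_Ici_of_tendsto_deriv
      (fun τ hτ => (hd τ hτ).differentiableAt.differentiableWithinAt) hcont
      (Ioo_mem_nhdsGT hab) ?_
    have hlim : Tendsto (fun τ => h (x τ)) (𝓝[>] a) (𝓝 (h (x a))) := by
      rw [← nhdsWithin_Ioo_eq_nhdsGT hab]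
      exact hh.continuousAt.comp_continuousWithinAt hcont
    refine hlim.congr' ?_
    filter_upwards [Ioo_mem_nhdsGT hab] with τ hτ
    exact (hd τ hτ).deriv.symm
  · exact (hd s ⟨has, hs.2⟩).hasDerivWithinAt

/-- Barrier argument: wherever `‖x s - x a‖ = M (s - a)`, the point `x s` still lies in the
ball, where `‖h‖ < M`, so the bound cannot be crossed. -/
lemma IsSolutionOn.norm_sub_le (hx : IsSolutionOn h x a b)
    (hM₀ : 0 ≤ M) (hM : ∀ y ∈ closedBall x₀ r, ‖h y‖ < M) (hr : ‖x a - x₀‖ + M * (b - a) ≤ r) :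
    ∀ s ∈ Icc a b, ‖x s - x a‖ ≤ M * (s - a) := by
  refine image_norm_le_of_norm_deriv_right_lt_deriv_boundary' (f := fun s => x s - x a)
    (hx.1.sub continuousOn_const) (fun s hs => (hx.2 s hs).sub_const (x a)) (by simp) (by fun_prop)
    (fun s _ => ((hasDerivWithinAt_id s _).sub_const a).const_mul M |>.congr_deriv (mul_one M))
    fun s hs hs_eq => hM _ ?_
  rw [Metric.mem_closedBall, dist_eq_norm]
  calc ‖x s - x₀‖ ≤ ‖x s - x a‖ + ‖x a - x₀‖ := norm_sub_le_norm_sub_add_norm_sub _ _ _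
    _ ≤ M * (b - a) + ‖x a - x₀‖ := by
        rw [hs_eq]
        gcongr
        exact hs.2.le
    _ ≤ r := by linarith

lemma IsSolutionOn.mem_closedBall (hx : IsSolutionOn h x a b) (hM₀ : 0 ≤ M)
    (hM : ∀ y ∈ closedBall x₀ r, ‖h y‖ < M) (hr : ‖x a - x₀‖ + M * (b - a) ≤ r) :
    ∀ s ∈ Icc a b, x s ∈ closedBall x₀ r := by
  intro s hs
  rw [Metric.mem_closedBall, dist_eq_norm]
  calc ‖x s - x₀‖ ≤ ‖x s - x a‖ + ‖x a - x₀‖ := norm_sub_le_norm_sub_add_norm_sub _ _ _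
    _ ≤ M * (b - a) + ‖x a - x₀‖ := by
        gcongr
        exact (hx.norm_sub_le hM₀ hM hr s hs).trans (by gcongr; exact hs.2)
    _ ≤ r := by linarith

lemma IsSolutionOn.hasDerivWithinAt_sub_sub_smul_sub_smul (hx : IsSolutionOn h x a b) (v w : E) :
    ∀ s ∈ Ico a b, HasDerivWithinAt (fun s => x s - x a - (s - a) • v - ((s - a) ^ 2 / 2) • w)
      (h (x s) - v - (s - a) • w) (Ici s) s := fun s hs => by
  have hlin : HasDerivWithinAt (fun s => (s - a) • v) v (Ici s) s := by
    simpa using ((hasDerivWithinAt_id s (Ici s)).sub_const a).smul_const v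
  have hquad : HasDerivWithinAt (fun s => ((s - a) ^ 2 / 2) • w) ((s - a) • w) (Ici s) s := by
    simpa using ((((hasDerivWithinAt_id s (Ici s)).sub_const a).pow 2).div_const 2).smul_const w
  simpa using (((hx.2 s hs).sub_const (x a)).fun_sub hlin).fun_sub hquad

lemma IsSolutionOn.norm_sub_sub_smul_le {L : ℝ} (hx : IsSolutionOn h x a b) (hL₀ : 0 ≤ L)
    (hM₀ : 0 ≤ M) (hM : ∀ y ∈ closedBall x₀ r, ‖h y‖ < M) (hr : ‖x a - x₀‖ + M * (b - a) ≤ r)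
    (hlip : ∀ u ∈ closedBall x₀ r, ∀ v ∈ closedBall x₀ r, ‖h u - h v‖ ≤ L * ‖u - v‖) :
    ∀ s ∈ Icc a b, ‖x s - x a - (s - a) • h (x a)‖ ≤ L * M * (b - a) * (s - a) := by
  have hball := hx.mem_closedBall hM₀ hM hr
  have hbound : ∀ s ∈ Ico a b, ‖h (x s) - h (x a)‖ ≤ L * M * (b - a) := fun s hs => by
    have hs' := Ico_subset_Icc_self hs
    have ha : a ∈ Icc a b := left_mem_Icc.2 (hs.1.trans hs.2.le)
    calc ‖h (x s) - h (x a)‖ ≤ L * ‖x s - x a‖ := hlip _ (hball s hs') _ (hball a ha)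
      _ ≤ L * (M * (s - a)) := by gcongr; exact hx.norm_sub_le hM₀ hM hr s hs'
      _ ≤ L * M * (b - a) := by rw [← mul_assoc]; gcongr; exact hs.2.le
  intro s hs
  simpa using norm_image_sub_le_of_norm_deriv_right_le_segment (by have := hx.1; fun_prop)
    (hx.hasDerivWithinAt_sub_sub_smul_sub_smul (h (x a)) 0) (by simpa using hbound) s hs

lemma IsSolutionOn.norm_sub_sub_smul_sub_smul_le {A : E →L[ℝ] E} {ε : ℝ}
    (hx : IsSolutionOn h x a b) (hab : a ≤ b) (hε : 0 ≤ ε) (hM₀ : 0 ≤ M)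
    (hM : ∀ y ∈ closedBall x₀ r, ‖h y‖ < M) (hr : ‖x a - x₀‖ + M * (b - a) ≤ r)
    (hA : ∀ u ∈ closedBall x₀ r, ∀ v ∈ closedBall x₀ r, ‖h u - h v - A (u - v)‖ ≤ ε * ‖u - v‖) :
    ‖x b - x a - (b - a) • h (x a) - ((b - a) ^ 2 / 2) • A (h (x a))‖
      ≤ (ε * M + ‖A‖ * (‖A‖ + ε) * M * (b - a)) * (b - a) ^ 2 := by
  have hball := hx.mem_closedBall hM₀ hM hr
  have hmove := hx.norm_sub_le hM₀ hM hr
  have ha : a ∈ Icc a b := left_mem_Icc.2 hab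
  have hfirst := hx.norm_sub_sub_smul_le (by positivity) hM₀ hM hr
    (norm_sub_le_of_norm_sub_sub_le hA)
  have hbound : ∀ s ∈ Ico a b, ‖h (x s) - h (x a) - (s - a) • A (h (x a))‖
      ≤ ε * M * (b - a) + ‖A‖ * ((‖A‖ + ε) * M * (b - a) * (b - a)) := fun s hs => by
    have hs' := Ico_subset_Icc_self hs
    have hsplit : h (x s) - h (x a) - (s - a) • A (h (x a))
        = (h (x s) - h (x a) - A (x s - x a)) + A (x s - x a - (s - a) • h (x a)) := by
      simp only [map_sub, map_smul]
      abel
    rw [hsplit]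
    refine (norm_add_le _ _).trans (add_le_add ?_ ?_)
    · calc ‖h (x s) - h (x a) - A (x s - x a)‖ ≤ ε * ‖x s - x a‖ :=
            hA _ (hball s hs') _ (hball a ha)
        _ ≤ ε * (M * (b - a)) := by
            gcongr
            exact (hmove s hs').trans (by gcongr; exact hs.2.le)
        _ = ε * M * (b - a) := by ring
    · refine (A.le_opNorm _).trans ?_
      gcongr
      exact (hfirst s hs').trans (by gcongr; exact hs.2.le)
  have hmvt := norm_image_sub_le_of_norm_deriv_right_le_segment (by have := hx.1; fun_prop)
    (hx.hasDerivWithinAt_sub_sub_smul_sub_smul (h (x a)) (A (h (x a)))) hbound b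
    (right_mem_Icc.2 hab)
  simp only [sub_self, zero_smul, ne_eq, OfNat.ofNat_ne_zero, not_false_eq_true, zero_pow,
    zero_div, sub_zero] at hmvt
  exact hmvt.trans_eq (by ring)

theorem isLittleO_sub_sub_smul_sub_smul_of_isSolutionOn {A : E →L[ℝ] E}
    (hh : HasStrictFDerivAt h A x₀) {a : ℝ → ℝ} {x : ℝ → ℝ → E}
    (hx : ∀ t > 0, IsSolutionOn h (x t) (a t) (a t + t))
    (hx₀ : Tendsto (fun t => x t (a t)) (𝓝[>] 0) (𝓝 x₀)) :
    (fun t => x t (a t + t) - x t (a t) - t • h (x t (a t)) - (t ^ 2 / 2) • A (h (x t (a t))))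
      =o[𝓝[>] 0] fun t => t ^ 2 := by
  set M := ‖h x₀‖ + 1
  have hM₀ : 0 < M := by positivity
  refine isLittleO_iff.2 fun c hc => ?_
  obtain ⟨ε, hε, hεM⟩ : ∃ ε > 0, ε * M = c / 2 := ⟨c / (2 * M), by positivity, by field_simp⟩
  have hnear : ∀ᶠ q in 𝓝 (x₀, x₀), ‖h q.1‖ < M ∧
      ‖h q.1 - h q.2 - A (q.1 - q.2)‖ ≤ ε * ‖q.1 - q.2‖ :=
    ((continuous_fst.tendsto (x₀, x₀)).eventually
      (hh.continuousAt.norm.eventually (gt_mem_nhds (lt_add_one _)))).and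
      ((hasStrictFDerivAt_iff_isLittleO.1 hh).def hε)
  obtain ⟨r, hr, hball⟩ := nhds_basis_closedBall.eventually_iff.1 hnear
  rw [← closedBall_prod_same] at hball
  set K := ‖A‖ * (‖A‖ + ε) * M
  have ht : Tendsto (fun t : ℝ => t) (𝓝[>] 0) (𝓝 0) := nhdsWithin_le_nhds
  filter_upwards [self_mem_nhdsWithin, hx₀.eventually (closedBall_mem_nhds x₀ (half_pos hr)),
    (by simpa using ht.const_mul M : Tendsto (fun t => M * t) _ (𝓝 0)).eventually_lt_const
      (half_pos hr),
    (by simpa using ht.const_mul K : Tendsto (fun t => K * t) _ (𝓝 0)).eventually_lt_const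
      (half_pos hc)] with t (ht₀ : 0 < t) hstart hMt hKt
  rw [dist_eq_norm] at hstart
  have hbound := (hx t ht₀).norm_sub_sub_smul_sub_smul_le (by linarith) hε.le hM₀.le
    (fun y hy => (@hball (y, y) ⟨hy, hy⟩).1) (by rw [add_sub_cancel_left]; linarith)
    (fun u hu v hv => (@hball (u, v) ⟨hu, hv⟩).2)
  rw [add_sub_cancel_left] at hbound
  calc _ ≤ (ε * M + K * t) * t ^ 2 := hbound
    _ ≤ c * ‖t ^ 2‖ := by
        rw [norm_pow, Real.norm_eq_abs, abs_of_pos ht₀]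
        gcongr
        linarith

end Flow

section Expansion

variable {E : Type*} [NormedAddCommGroup E] [NormedSpace ℝ E] {y z : ℝ → E} {p v w : E}

def HasSecondOrderExpansion (y : ℝ → E) (p v w : E) : Prop :=
  (fun t => y t - p - t • v - (t ^ 2 / 2) • w) =o[𝓝[>] 0] fun t => t ^ 2

lemma HasSecondOrderExpansion.isBigO_sub_sub_smul (hy : HasSecondOrderExpansion y p v w) :
    (fun t => y t - p - t • v) =O[𝓝[>] 0] fun t => t ^ 2 := by
  have hquad : (fun t : ℝ => (t ^ 2 / 2) • w) =O[𝓝[>] 0] fun t => t ^ 2 := by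
    simpa [div_eq_inv_mul] using ((isBigO_refl (fun t : ℝ => t ^ 2) _).const_mul_left 2⁻¹).smul
      (isBigO_const_const w (one_ne_zero : (1 : ℝ) ≠ 0) _)
  simpa using hy.isBigO.add hquad

lemma HasSecondOrderExpansion.isBigO_sub (hy : HasSecondOrderExpansion y p v w) :
    (fun t => y t - p) =O[𝓝[>] 0] fun t => t := by
  have hsq : (fun t : ℝ => t ^ 2) =O[𝓝[>] 0] fun t => t := by
    simpa using (isLittleO_pow_pow (𝕜 := ℝ) one_lt_two).isBigO.mono nhdsWithin_le_nhds
  have hlin : (fun t : ℝ => t • v) =O[𝓝[>] 0] fun t => t := by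
    simpa using (isBigO_refl (fun t : ℝ => t) _).smul
      (isBigO_const_const v (one_ne_zero : (1 : ℝ) ≠ 0) _)
  simpa using (hy.isBigO_sub_sub_smul.trans hsq).add hlin

lemma HasSecondOrderExpansion.tendsto (hy : HasSecondOrderExpansion y p v w) :
    Tendsto y (𝓝[>] 0) (𝓝 p) := by
  simpa using (hy.isBigO_sub.trans_tendsto
    (tendsto_nhdsWithin_of_tendsto_nhds tendsto_id)).add_const p

/-- The cross term `2 • G v` comes from `g (y t) ≈ g p + t • G v`. -/
theorem HasSecondOrderExpansion.concat {g : E → E} {G : E →L[ℝ] E} (hg : HasFDerivAt g G p)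
    (hy : HasSecondOrderExpansion y p v w)
    (hz : (fun t => z t - y t - t • g (y t) - (t ^ 2 / 2) • G (g (y t)))
      =o[𝓝[>] 0] fun t => t ^ 2) :
    HasSecondOrderExpansion z p (v + g p) (w + (2 : ℝ) • G v + G (g p)) := by
  have e₁ : (fun t : ℝ => t • (g (y t) - g p - G (y t - p))) =o[𝓝[>] 0] fun t => t ^ 2 := by
    simpa [sq] using (isBigO_refl (fun t : ℝ => t) _).smul_isLittleO
      ((hg.isLittleO.comp_tendsto hy.tendsto).trans_isBigO hy.isBigO_sub)
  have e₂ : (fun t : ℝ => t • G (y t - p - t • v)) =o[𝓝[>] 0] fun t => t ^ 2 := by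
    have ht : (fun t : ℝ => t) =o[𝓝[>] 0] fun _ => (1 : ℝ) :=
      (isLittleO_one_iff ℝ).2 (tendsto_nhdsWithin_of_tendsto_nhds tendsto_id)
    simpa using ht.smul_isBigO ((G.isBigO_comp _ _).trans hy.isBigO_sub_sub_smul)
  have e₃ : (fun t : ℝ => (t ^ 2 / 2) • G (g (y t) - g p)) =o[𝓝[>] 0] fun t => t ^ 2 := by
    have hsmall : (fun t => G (g (y t) - g p)) =o[𝓝[>] 0] fun _ => (1 : ℝ) := by
      refine (isLittleO_one_iff ℝ).2 ?_
      simpa [Function.comp_def] using (G.continuous.tendsto _).comp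
        ((hg.continuousAt.tendsto.comp hy.tendsto).sub_const (g p))
    simpa [div_eq_inv_mul] using
      ((isBigO_refl (fun t : ℝ => t ^ 2) _).const_mul_left 2⁻¹).smul_isLittleO hsmall
  refine ((((hy.add hz).add e₁).add e₂).add e₃).congr_left fun t => ?_
  simp only [map_sub, map_smul]
  module

end Expansion

section SwitchTraj

variable {n : ℕ} {f g : Euc n → Euc n} {t : ℝ} {x₀ : Euc n} {x : ℝ → Euc n}

lemma IsSwitchTraj.isSolutionOn_left (hf : Continuous f) (hx : IsSwitchTraj f g t x₀ x)
    (ht : 0 ≤ t) : IsSolutionOn f x 0 t :=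
  .of_hasDerivAt hf (hx.2.1.mono (Icc_subset_Icc_right (by linarith))) hx.2.2.1

lemma IsSwitchTraj.isSolutionOn_right (hg : Continuous g) (hx : IsSwitchTraj f g t x₀ x)
    (ht : 0 ≤ t) : IsSolutionOn g x t (t + t) := by
  rw [← two_mul]
  exact .of_hasDerivAt hg (hx.2.1.mono (Icc_subset_Icc_left ht)) hx.2.2.2

end SwitchTraj

/-- Proposition 1: second order Taylor expansion of a single-switch
trajectory: `x_{2t} - x₀ = (f(x₀)+g(x₀)) t + (D(f+g)(x₀)(f(x₀)+g(x₀)) + [f,g](x₀)) t²/2 + o(t²)`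
as `t → 0⁺`. -/
theorem statement0 {n : ℕ} (f g : Euc n → Euc n)
    (hf : ContDiff ℝ 1 f) (hg : ContDiff ℝ 1 g) (x₀ : Euc n)
    (X : ℝ → ℝ → Euc n) (hX : ∀ t > (0 : ℝ), IsSwitchTraj f g t x₀ (X t)) :
    (fun t : ℝ => X t (2 * t) - x₀ - t • (f x₀ + g x₀) -
        (t ^ 2 / 2) • (fderiv ℝ (fun y => f y + g y) x₀ (f x₀ + g x₀) + lieBracket f g x₀))
      =o[𝓝[>] (0 : ℝ)] fun t => t ^ 2 := by
  have hX₀ : ∀ᶠ t in 𝓝[>] (0 : ℝ), X t 0 = x₀ :=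
    eventually_mem_nhdsWithin.mono fun t ht => (hX t ht).1
  have leg₁ : HasSecondOrderExpansion (fun t => X t t) x₀ (f x₀) (fderiv ℝ f x₀ (f x₀)) :=
    (isLittleO_sub_sub_smul_sub_smul_of_isSolutionOn (a := fun _ => 0)
      (hf.hasStrictFDerivAt one_ne_zero)
      (fun t ht => by simpa using (hX t ht).isSolutionOn_left hf.continuous ht.le)
      (tendsto_const_nhds.congr' (hX₀.mono fun t ht => ht.symm))).congr'
      (hX₀.mono fun t ht => by simp [ht]) .rfl
  have leg₂ := isLittleO_sub_sub_smul_sub_smul_of_isSolutionOn (a := fun t => t)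
    (hg.hasStrictFDerivAt one_ne_zero)
    (fun t ht => (hX t ht).isSolutionOn_right hg.continuous ht.le) leg₁.tendsto
  have hf₀ := hf.differentiable one_ne_zero x₀
  have hg₀ := hg.differentiable one_ne_zero x₀
  refine (leg₁.concat hg₀.hasFDerivAt leg₂).congr_left fun t => ?_
  rw [two_mul, fderiv_fun_add hf₀ hg₀]
  simp only [lieBracket, _root_.add_apply, map_add]
  module
end

section
/- Let f, g : ℝⁿ → ℝⁿ be C¹ vector fields, u ∈ C²(ℝⁿ), and x₀ ∈ ℝⁿ. For each t > 0 let x^t denote the single-switch trajectory with data (f, g, t, x₀). Then as t → 0⁺: u(x^t(2t)) − u(x₀) = ∇u(x₀)·(f+g)(x₀) t + ( H_{f+g,f+g}u(x₀) + ∇u(x₀)·[f,g](x₀) ) t²/2 + o(t²), and equivalently u(x^t(2t)) − u(x₀) = ∇u(x₀)·(f+g)(x₀) t + ( H_{f,f}u(x₀) + H_{g,g}u(x₀) + 2 H_{f,g}u(x₀) ) t²/2 + o(t²). In particular, if f ≡ g then u(x^t(2t)) − u(x₀) = 2( ∇u(x₀)·f(x₀) t + H_{f,f}u(x₀) t² )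 + o(t²). -/
open Set Filter Metric Matrix MeasureTheory Asymptotics
open scoped RealInnerProductSpace ENNReal Topology

/-!
On the first arc `(u ∘ x)' = V_f ∘ x` and on the second `(u ∘ x)' = V_g ∘ x`, where
`V_k = ∇u · k`; along an arc following `h`, `(V_k ∘ x)' = H_{h,k}u ∘ x`. A fencing argument
with a local bound on `|f|, |g|` keeps `x` within `O(t)` of `x₀`, so by continuity these
derivatives are `ε`-close to their values at `x₀` for small `t`, and the mean value inequality
applied twice on each arc gives
`u(x(t)) - u(x₀) ≈ t V_f(x₀) + t²/2 H_{f,f}u(x₀)` and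
`u(x(2t)) - u(x(t)) ≈ t V_g(x(t)) + t²/2 H_{g,g}u(x₀)`, with
`V_g(x(t)) ≈ V_g(x₀) + t H_{f,g}u(x₀)`: errors `O(εt²)` in total. The form with the Lie bracket
is the same expansion, by symmetry of `D²u`.
-/

theorem hasDerivWithinAt_Ici_of_forall_mem_Ioo {E : Type*} [NormedAddCommGroup E]
    [NormedSpace ℝ E] {y v : ℝ → E} {a b : ℝ} (hab : a < b) (hy : ContinuousOn y (Icc a b))
    (hv : ContinuousOn v (Icc a b)) (hd : ∀ s ∈ Ioo a b, HasDerivAt y (v s) s) :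
    ∀ s ∈ Ico a b, HasDerivWithinAt y (v s) (Ici s) s := by
  rintro s ⟨has, hsb⟩
  rcases has.eq_or_lt with rfl | has
  · have hva : Tendsto v (𝓝[>] a) (𝓝 (v a)) := by
      rw [← nhdsWithin_Ioo_eq_nhdsGT hab]
      exact (hv a (left_mem_Icc.2 hab.le)).mono Ioo_subset_Icc_self
    refine hasDerivWithinAt_Ici_of_tendsto_deriv (s := Ioo a b)
      (fun r hr => (hd r hr).differentiableAt.differentiableWithinAt)
      ((hy a (left_mem_Icc.2 hab.le)).mono Ioo_subset_Icc_self) (Ioo_mem_nhdsGT hab) ?_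
    refine hva.congr' ?_
    filter_upwards [Ioo_mem_nhdsGT hab] with r hr
    exact (hd r hr).deriv.symm
  · exact (hd s ⟨has, hsb⟩).hasDerivWithinAt

theorem abs_sub_sub_mul_le_of_hasDerivWithinAt_Ici {W w : ℝ → ℝ} {a b q ε : ℝ}
    (hW : ContinuousOn W (Icc a b)) (hW' : ∀ s ∈ Ico a b, HasDerivWithinAt W (w s) (Ici s) s)
    (hw : ∀ s ∈ Ico a b, |w s - q| ≤ ε) :
    ∀ s ∈ Icc a b, |W s - W a - q * (s - a)| ≤ ε * (s - a) := by
  intro s hs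
  have h := norm_image_sub_le_of_norm_deriv_right_le_segment (f := fun r => W r - q * r)
    (hW.sub (continuousOn_const.mul continuousOn_id))
    (fun r hr => by
      have h := (hW' r hr).sub ((hasDerivWithinAt_id r _).const_mul q)
      rwa [mul_one] at h) hw s hs
  rw [Real.norm_eq_abs] at h
  convert h using 2
  ring

theorem abs_sub_sub_mul_sub_le_of_hasDerivWithinAt_Ici {φ W w : ℝ → ℝ} {a b q ε : ℝ}
    (hab : a ≤ b) (hφ : ContinuousOn φ (Icc a b)) (hW : ContinuousOn W (Icc a b))
    (hφ' : ∀ s ∈ Ico a b, HasDerivWithinAt φ (W s) (Ici s) s)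
    (hW' : ∀ s ∈ Ico a b, HasDerivWithinAt W (w s) (Ici s) s)
    (hw : ∀ s ∈ Ico a b, |w s - q| ≤ ε) :
    |φ b - φ a - W a * (b - a) - q * (b - a) ^ 2 / 2| ≤ ε * (b - a) ^ 2 := by
  have hW_lin := abs_sub_sub_mul_le_of_hasDerivWithinAt_Ici hW hW' hw
  have hP : ∀ r, HasDerivAt (fun r => W a * r + q * (r - a) ^ 2 / 2) (W a + q * (r - a)) r :=
    fun r => ((hasDerivAt_mul_const (W a)).add
      ((((hasDerivAt_id' r).sub_const a).pow 2).const_mul q |>.div_const 2)).congr_deriv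
        (by push_cast; ring) |>.congr_of_eventuallyEq (.of_forall fun y => by simp [mul_comm])
  have h := norm_image_sub_le_of_norm_deriv_right_le_segment
    (f := fun r => φ r - (W a * r + q * (r - a) ^ 2 / 2)) (C := ε * (b - a))
    (hφ.sub fun r _ => (hP r).continuousAt.continuousWithinAt)
    (fun r hr => (hφ' r hr).sub (hP r).hasDerivWithinAt)
    (fun r hr => by
      rw [Real.norm_eq_abs, show W r - (W a + q * (r - a)) = W r - W a - q * (r - a) by ring]
      exact (hW_lin r (Ico_subset_Icc_self hr)).trans
        (mul_le_mul_of_nonneg_left (by linarith [hr.2]) ((abs_nonneg _).trans (hw r hr))))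
    b (right_mem_Icc.2 hab)
  rw [Real.norm_eq_abs, mul_assoc, ← sq] at h
  convert h using 2
  ring

theorem norm_sub_le_of_hasDerivWithinAt_Ici_of_norm_lt {E : Type*} [NormedAddCommGroup E]
    [NormedSpace ℝ E] {y : ℝ → E} {F : E → E} {a b K R : ℝ} {c : E}
    (hy : ContinuousOn y (Icc a b)) (hy' : ∀ s ∈ Ico a b, HasDerivWithinAt y (F (y s)) (Ici s) s)
    (hF : ∀ z ∈ closedBall c R, ‖F z‖ < K) (hK : 0 ≤ K) (hR : ‖y a - c‖ + K * (b - a) ≤ R) :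
    ∀ s ∈ Icc a b, ‖y s - c‖ ≤ ‖y a - c‖ + K * (s - a) := by
  refine image_norm_le_of_norm_deriv_right_lt_deriv_boundary' (hy.sub continuousOn_const)
    (fun s hs => (hy' s hs).sub_const c) (by simp) (by fun_prop) (B' := fun _ => K)
    (fun s _ => by
      simpa using (((hasDerivWithinAt_id s _).sub_const a).const_mul K).const_add ‖y a - c‖)
    fun s hs hys => hF _ ?_
  rw [mem_closedBall, dist_eq_norm, show ‖y s - c‖ = _ from hys]
  nlinarith [hs.2]

section Hamiltonian

variable {n : ℕ} {u : Euc n → ℝ} {h k : Euc n → Euc n}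

theorem contDiff_inner_gradient (hu : ContDiff ℝ 2 u) (hk : ContDiff ℝ 1 k) :
    ContDiff ℝ 1 fun y => ⟪gradient u y, k y⟫ := by
  simp_rw [inner_gradient_left]
  exact (hu.fderiv_right (by norm_num)).clm_apply hk

theorem continuous_H2 (hu : ContDiff ℝ 2 u) (hh : Continuous h) (hk : ContDiff ℝ 1 k) :
    Continuous (H2 h k u) :=
  ((contDiff_inner_gradient hu hk).continuous_fderiv one_ne_zero).clm_apply hh

theorem H2_eq_fderiv (hu : ContDiff ℝ 2 u) (hk : ContDiff ℝ 1 k) (x : Euc n) :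
    H2 h k u x = fderiv ℝ (fderiv ℝ u) x (h x) (k x) + fderiv ℝ u x (fderiv ℝ k x (h x)) := by
  have hDu : ContDiff ℝ 1 (fderiv ℝ u) := hu.fderiv_right (by norm_num)
  simp_rw [H2, inner_gradient_left]
  rw [fderiv_clm_apply (hDu.differentiable one_ne_zero x) (hk.differentiable one_ne_zero x)]
  simp only [_root_.add_apply, ContinuousLinearMap.comp_apply,
    ContinuousLinearMap.flip_apply]
  ring

theorem H2_add_add_inner_lieBracket {f g : Euc n → Euc n} (hf : ContDiff ℝ 1 f)
    (hg : ContDiff ℝ 1 g) (hu : ContDiff ℝ 2 u) (x : Euc n) :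
    H2 (fun y => f y + g y) (fun y => f y + g y) u x + ⟪gradient u x, lieBracket f g x⟫ =
      H2 f f u x + H2 g g u x + 2 * H2 f g u x := by
  have hsymm := hu.contDiffAt.isSymmSndFDerivAt (x := x) (by simp) (f x) (g x)
  rw [H2_eq_fderiv hu (hf.add hg), H2_eq_fderiv hu hf, H2_eq_fderiv hu hg,
    H2_eq_fderiv hu hg, inner_gradient_left, lieBracket,
    fderiv_fun_add (hf.differentiable one_ne_zero x) (hg.differentiable one_ne_zero x)]
  simp only [map_add, map_sub, _root_.add_apply]
  linarith

end Hamiltonian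

section Segment

variable {n : ℕ} {u : Euc n → ℝ} {h k : Euc n → Euc n} {y : ℝ → Euc n} {a b q ε : ℝ}

theorem abs_inner_gradient_comp_sub_le (hu : ContDiff ℝ 2 u) (hk : ContDiff ℝ 1 k)
    (hy : ContinuousOn y (Icc a b))
    (hy' : ∀ s ∈ Ico a b, HasDerivWithinAt y (h (y s)) (Ici s) s)
    (hq : ∀ s ∈ Ico a b, |H2 h k u (y s) - q| ≤ ε) :
    ∀ s ∈ Icc a b, |⟪gradient u (y s), k (y s)⟫ - ⟪gradient u (y a), k (y a)⟫ - q * (s - a)|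
      ≤ ε * (s - a) :=
  have hV := contDiff_inner_gradient hu hk
  abs_sub_sub_mul_le_of_hasDerivWithinAt_Ici (hV.continuous.comp_continuousOn hy)
    (fun s hs => (hV.differentiable one_ne_zero (y s)).hasFDerivAt.comp_hasDerivWithinAt s
      (hy' s hs)) hq

theorem abs_comp_sub_sub_le (hu : ContDiff ℝ 2 u) (hh : ContDiff ℝ 1 h)
    (hy : ContinuousOn y (Icc a b))
    (hy' : ∀ s ∈ Ico a b, HasDerivWithinAt y (h (y s)) (Ici s) s)
    (hq : ∀ s ∈ Ico a b, |H2 h h u (y s) - q| ≤ ε) (hab : a ≤ b) :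
    |u (y b) - u (y a) - ⟪gradient u (y a), h (y a)⟫ * (b - a) - q * (b - a) ^ 2 / 2|
      ≤ ε * (b - a) ^ 2 := by
  have hV := contDiff_inner_gradient hu hh
  refine abs_sub_sub_mul_sub_le_of_hasDerivWithinAt_Ici hab
    (hu.continuous.comp_continuousOn hy) (hV.continuous.comp_continuousOn hy) (fun s hs => ?_)
    (fun s hs => (hV.differentiable one_ne_zero (y s)).hasFDerivAt.comp_hasDerivWithinAt s
      (hy' s hs)) hq
  rw [Function.comp_apply, inner_gradient_left]
  exact (hu.differentiable two_ne_zero (y s)).hasFDerivAt.comp_hasDerivWithinAt s (hy' s hs)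

end Segment

namespace IsSwitchTraj

variable {n : ℕ} {f g : Euc n → Euc n} {t : ℝ} {x₀ : Euc n} {x : ℝ → Euc n}

theorem continuousOn_left (hx : IsSwitchTraj f g t x₀ x) (ht : 0 < t) :
    ContinuousOn x (Icc 0 t) :=
  hx.2.1.mono (Icc_subset_Icc_right (by linarith))

theorem continuousOn_right (hx : IsSwitchTraj f g t x₀ x) (ht : 0 < t) :
    ContinuousOn x (Icc t (2 * t)) :=
  hx.2.1.mono (Icc_subset_Icc_left ht.le)

theorem hasDerivWithinAt_left (hx : IsSwitchTraj f g t x₀ x) (ht : 0 < t) (hf : Continuous f) :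
    ∀ s ∈ Ico 0 t, HasDerivWithinAt x (f (x s)) (Ici s) s :=
  hasDerivWithinAt_Ici_of_forall_mem_Ioo ht (hx.continuousOn_left ht)
    (hf.comp_continuousOn (hx.continuousOn_left ht)) hx.2.2.1

theorem hasDerivWithinAt_right (hx : IsSwitchTraj f g t x₀ x) (ht : 0 < t) (hg : Continuous g) :
    ∀ s ∈ Ico t (2 * t), HasDerivWithinAt x (g (x s)) (Ici s) s :=
  hasDerivWithinAt_Ici_of_forall_mem_Ioo (by linarith) (hx.continuousOn_right ht)
    (hg.comp_continuousOn (hx.continuousOn_right ht)) hx.2.2.2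

theorem norm_sub_le (hx : IsSwitchTraj f g t x₀ x) (ht : 0 < t) (hf : Continuous f)
    (hg : Continuous g) {K R : ℝ} (hK : 0 ≤ K) (hfK : ∀ y ∈ closedBall x₀ R, ‖f y‖ < K)
    (hgK : ∀ y ∈ closedBall x₀ R, ‖g y‖ < K) (htR : 2 * t * K ≤ R) :
    ∀ s ∈ Icc 0 (2 * t), ‖x s - x₀‖ ≤ K * s := by
  have hleft := norm_sub_le_of_hasDerivWithinAt_Ici_of_norm_lt (hx.continuousOn_left ht)
    (hx.hasDerivWithinAt_left ht hf) hfK hK (by rw [hx.1, sub_self, norm_zero]; nlinarith)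
  simp only [hx.1, sub_self, norm_zero, zero_add, sub_zero] at hleft
  have hxt := hleft t (right_mem_Icc.2 ht.le)
  have hright := norm_sub_le_of_hasDerivWithinAt_Ici_of_norm_lt (hx.continuousOn_right ht)
    (hx.hasDerivWithinAt_right ht hg) hgK hK (by nlinarith)
  rintro s ⟨hs0, hs2⟩
  rcases le_total s t with hst | hts
  · exact hleft s ⟨hs0, hst⟩
  · linarith [hright s ⟨hts, hs2⟩]

theorem abs_sub_expansion_le {u : Euc n → ℝ} {ε : ℝ} (hx : IsSwitchTraj f g t x₀ x) (ht : 0 < t)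
    (hf : ContDiff ℝ 1 f) (hg : ContDiff ℝ 1 g) (hu : ContDiff ℝ 2 u)
    (hff : ∀ s ∈ Icc 0 (2 * t), |H2 f f u (x s) - H2 f f u x₀| ≤ ε)
    (hgg : ∀ s ∈ Icc 0 (2 * t), |H2 g g u (x s) - H2 g g u x₀| ≤ ε)
    (hfg : ∀ s ∈ Icc 0 (2 * t), |H2 f g u (x s) - H2 f g u x₀| ≤ ε) :
    |u (x (2 * t)) - u x₀ - t * ⟪gradient u x₀, f x₀ + g x₀⟫ -
        t ^ 2 / 2 * (H2 f f u x₀ + H2 g g u x₀ + 2 * H2 f g u x₀)| ≤ 3 * ε * t ^ 2 := by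
  have hIcoL : Ico 0 t ⊆ Icc 0 (2 * t) :=
    Ico_subset_Icc_self.trans (Icc_subset_Icc_right (by linarith))
  have hIcoR : Ico t (2 * t) ⊆ Icc 0 (2 * t) :=
    Ico_subset_Icc_self.trans (Icc_subset_Icc_left ht.le)
  have e₁ := abs_comp_sub_sub_le hu hf (hx.continuousOn_left ht)
    (hx.hasDerivWithinAt_left ht hf.continuous) (fun s hs => hff s (hIcoL hs)) ht.le
  have e₂ := abs_comp_sub_sub_le hu hg (hx.continuousOn_right ht)
    (hx.hasDerivWithinAt_right ht hg.continuous) (fun s hs => hgg s (hIcoR hs)) (by linarith)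
  have e₃ := abs_inner_gradient_comp_sub_le hu hg (hx.continuousOn_left ht)
    (hx.hasDerivWithinAt_left ht hf.continuous) (fun s hs => hfg s (hIcoL hs)) t
    (right_mem_Icc.2 ht.le)
  rw [hx.1, sub_zero] at e₁ e₃
  rw [show 2 * t - t = t by ring] at e₂
  -- the error is the sum of the error of `e₁`, that of `e₂` and `t` times that of `e₃`
  rw [inner_add_right, abs_le]
  rw [abs_le] at e₁ e₂ e₃
  constructor <;> nlinarith [e₁.1, e₁.2, e₂.1, e₂.2, e₃.1, e₃.2]

end IsSwitchTraj

section Expansion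

variable {n : ℕ} {f g : Euc n → Euc n} {x₀ : Euc n} {X : ℝ → ℝ → Euc n}

theorem eventually_switchTraj_mem (hf : Continuous f) (hg : Continuous g)
    (hX : ∀ t > (0 : ℝ), IsSwitchTraj f g t x₀ (X t)) {U : Set (Euc n)} (hU : U ∈ 𝓝 x₀) :
    ∀ᶠ t in 𝓝[>] (0 : ℝ), ∀ s ∈ Icc 0 (2 * t), X t s ∈ U := by
  obtain ⟨R, hR, hRU⟩ := nhds_basis_closedBall.mem_iff.1 hU
  obtain ⟨Mf, hMf⟩ := (isCompact_closedBall x₀ R).exists_bound_of_continuousOn hf.continuousOn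
  obtain ⟨Mg, hMg⟩ := (isCompact_closedBall x₀ R).exists_bound_of_continuousOn hg.continuousOn
  set K := max Mf Mg + 1
  have hK : 0 < K := by
    linarith [le_max_left Mf Mg, (norm_nonneg _).trans (hMf x₀ (mem_closedBall_self hR.le))]
  filter_upwards [Ioo_mem_nhdsGT (show 0 < R / (2 * K) by positivity)] with t ⟨ht, htR⟩ s hs
  rw [lt_div_iff₀ (by positivity)] at htR
  have hxs := (hX t ht).norm_sub_le ht hf hg hK.le
    (fun y hy => (hMf y hy).trans_lt (by linarith [le_max_left Mf Mg]))
    (fun y hy => (hMg y hy).trans_lt (by linarith [le_max_right Mf Mg])) (by linarith) s hs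
  exact hRU (mem_closedBall_iff_norm.2 (by nlinarith [hs.2]))

theorem isLittleO_switchTraj_expansion (hf : ContDiff ℝ 1 f) (hg : ContDiff ℝ 1 g)
    {u : Euc n → ℝ} (hu : ContDiff ℝ 2 u) (hX : ∀ t > (0 : ℝ), IsSwitchTraj f g t x₀ (X t)) :
    (fun t : ℝ => u (X t (2 * t)) - u x₀ - t * ⟪gradient u x₀, f x₀ + g x₀⟫ -
        t ^ 2 / 2 * (H2 f f u x₀ + H2 g g u x₀ + 2 * H2 f g u x₀))
      =o[𝓝[>] (0 : ℝ)] fun t => t ^ 2 := by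
  refine isLittleO_iff.2 fun c hc => ?_
  have hnear : ∀ {h k : Euc n → Euc n}, ContDiff ℝ 1 h → ContDiff ℝ 1 k →
      ∀ᶠ y in 𝓝 x₀, |H2 h k u y - H2 h k u x₀| ≤ c / 3 := fun hh hk =>
    ((continuous_H2 hu hh.continuous hk).tendsto x₀).eventually
      (closedBall_mem_nhds _ (by positivity))
  filter_upwards [eventually_switchTraj_mem hf.continuous hg.continuous hX
    ((hnear hf hf).and ((hnear hg hg).and (hnear hf hg))), self_mem_nhdsWithin] with t hxt ht
  rw [Real.norm_of_nonneg (sq_nonneg t), Real.norm_eq_abs]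
  have := (hX t ht).abs_sub_expansion_le ht hf hg hu (fun s hs => (hxt s hs).1)
    (fun s hs => (hxt s hs).2.1) (fun s hs => (hxt s hs).2.2)
  linarith

end Expansion

/-- Proposition 2.4: second order expansion of `u` along a single-switch
trajectory, expressed with second order Hamiltonians, together with the particular case
`f ≡ g`. -/
theorem statement2 {n : ℕ} (f g : Euc n → Euc n)
    (hf : ContDiff ℝ 1 f) (hg : ContDiff ℝ 1 g)
    (u : Euc n → ℝ) (hu : ContDiff ℝ 2 u) (x₀ : Euc n)
    (X : ℝ → ℝ → Euc n) (hX : ∀ t > (0 : ℝ), IsSwitchTraj f g t x₀ (X t)) :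
    ((fun t : ℝ => u (X t (2 * t)) - u x₀ - t * ⟪gradient u x₀, f x₀ + g x₀⟫ -
        t ^ 2 / 2 * (H2 (fun y => f y + g y) (fun y => f y + g y) u x₀ +
          ⟪gradient u x₀, lieBracket f g x₀⟫))
      =o[𝓝[>] (0 : ℝ)] fun t => t ^ 2) ∧
    ((fun t : ℝ => u (X t (2 * t)) - u x₀ - t * ⟪gradient u x₀, f x₀ + g x₀⟫ -
        t ^ 2 / 2 * (H2 f f u x₀ + H2 g g u x₀ + 2 * H2 f g u x₀))
      =o[𝓝[>] (0 : ℝ)] fun t => t ^ 2) ∧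
    (f = g →
      (fun t : ℝ => u (X t (2 * t)) - u x₀ -
          2 * (t * ⟪gradient u x₀, f x₀⟫ + H2 f f u x₀ * t ^ 2))
        =o[𝓝[>] (0 : ℝ)] fun t => t ^ 2) := by
  have h := isLittleO_switchTraj_expansion hf hg hu hX
  refine ⟨?_, h, ?_⟩
  · rwa [H2_add_add_inner_lieBracket hf hg hu]
  · rintro rfl
    refine h.congr_left fun t => ?_
    rw [inner_add_right]
    ring
end

section
/- Let 𝒯 ⊂ ℝⁿ be a closed set, x̄ ∈ ∂𝒯, and d(x) = dist(x,𝒯). Let T : ℝⁿ → [0,∞) satisfy T = 0 on 𝒯, and suppose there are r, C > 0 with r ≤ 1 such that T(x) ≤ C|x − x̄|^{1/2} for all x ∈ B_r(x̄). Let K, u ≥ 1 and define D := (B_r(x̄) \ {x̄}) ∩ {x : K d(x) ≤ |x − x̄|^u} and B := ∂𝒯 ∩ (B_r(x̄) \ {x̄}). Assume there are constants L, R > 0 and s ∈ (0,1] such that for every y ∈ B there exist r_y, ρ_y > 0 with: T(x) ≤ (2L/ρ_y) d(x) for all x ∈ B_{r_y}(y), r_y^s ≤ R ρ_y, and D ⊂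 ∪_{y∈B} B_{r_y}(y). Then there exists M ≥ 0 such that T(x) ≤ M d(x)^{s̄} for all x ∈ B_r(x̄), where s̄ = min{1/(2u), 1 − s}. -/
open Set Filter Metric Matrix MeasureTheory Asymptotics
open scoped RealInnerProductSpace ENNReal Topology

/-!
Split the points of `B_r(x̄)` off the target by comparing `K d(x)` with `|x - x̄|^p`. Where
`K d(x) ≤ |x - x̄|^p`, the covering puts `x` in a ball `B_{r_y}(y)` around a boundary point, and
`d(x) ≤ r_y` together with `r_y^s ≤ R ρ_y` turns the first order estimate into
`T(x) ≤ 2LR d(x)^{1-s}`. Elsewhere `|x - x̄| < (K d(x))^{1/p}`, so the square-root estimate gives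
`T(x) ≤ C K^{1/(2p)} d(x)^{1/(2p)}`. Since `d(x) ≤ r ≤ 1`, both bounds are at most a constant
times `d(x)^{s̄}`.
-/

namespace Real

theorem div_mul_le_mul_rpow_one_sub {c ρ R d ϱ s : ℝ} (hc : 0 ≤ c) (hρ : 0 < ρ) (hd : 0 < d)
    (hs : 0 ≤ s) (hdϱ : d ≤ ϱ) (hϱ : ϱ ^ s ≤ R * ρ) : c / ρ * d ≤ c * R * d ^ (1 - s) := by
  have hds : d ^ s ≤ R * ρ := (rpow_le_rpow hd.le hdϱ hs).trans hϱ
  calc c / ρ * d = c / ρ * d ^ s * d ^ (1 - s) := by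
        rw [mul_assoc, ← rpow_add hd, add_sub_cancel, rpow_one]
    _ ≤ c / ρ * (R * ρ) * d ^ (1 - s) := by gcongr
    _ = c * R * d ^ (1 - s) := by field_simp

theorem rpow_half_le_of_rpow_le_mul {t K d p : ℝ} (ht : 0 ≤ t) (hK : 0 ≤ K) (hd : 0 ≤ d)
    (hp : 0 < p) (h : t ^ p ≤ K * d) :
    t ^ ((1 : ℝ) / 2) ≤ K ^ (1 / (2 * p)) * d ^ (1 / (2 * p)) := by
  calc t ^ ((1 : ℝ) / 2) = (t ^ p) ^ (1 / (2 * p)) := by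
        rw [← rpow_mul ht]; congr 1; field_simp
    _ ≤ (K * d) ^ (1 / (2 * p)) := by gcongr
    _ = K ^ (1 / (2 * p)) * d ^ (1 / (2 * p)) := mul_rpow hK hd

theorem mul_rpow_le_mul_rpow_of_le_one {c M a b d : ℝ} (hc : 0 ≤ c) (hcM : c ≤ M) (hba : b ≤ a)
    (hd0 : 0 < d) (hd1 : d ≤ 1) : c * d ^ a ≤ M * d ^ b :=
  mul_le_mul hcM (rpow_le_rpow_of_exponent_ge hd0 hd1 hba) (rpow_nonneg hd0.le a)
    (hc.trans hcM)

end Real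

theorem statement5_general {n : ℕ} (𝒯 : Set (Euc n)) (h𝒯 : IsClosed 𝒯)
    (xbar : Euc n) (hxbar : xbar ∈ frontier 𝒯)
    (T : Euc n → ℝ) (hTz : ∀ x ∈ 𝒯, T x = 0)
    (r C : ℝ) (hr1 : r ≤ 1) (hC : 0 < C)
    (hest : ∀ x ∈ closedBall xbar r, T x ≤ C * ‖x - xbar‖ ^ ((1 : ℝ) / 2))
    (K p : ℝ) (hK : 1 ≤ K) (hp : 1 ≤ p)
    (L R s : ℝ) (hL : 0 < L) (hR : 0 < R) (hs : s ∈ Ioc (0 : ℝ) 1)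
    (rr ρ : Euc n → ℝ)
    (hB : ∀ y ∈ frontier 𝒯 ∩ (closedBall xbar r \ {xbar}),
      0 < rr y ∧ 0 < ρ y ∧
        (∀ x ∈ closedBall y (rr y), T x ≤ 2 * L / ρ y * infDist x 𝒯) ∧
        rr y ^ s ≤ R * ρ y)
    (hcov : (closedBall xbar r \ {xbar}) ∩ {x | K * infDist x 𝒯 ≤ ‖x - xbar‖ ^ p} ⊆
      ⋃ y ∈ frontier 𝒯 ∩ (closedBall xbar r \ {xbar}), closedBall y (rr y)) :
    ∃ M : ℝ, 0 ≤ M ∧ ∀ x ∈ closedBall xbar r,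
      T x ≤ M * infDist x 𝒯 ^ min (1 / (2 * p)) (1 - s) := by
  have hxbar𝒯 : xbar ∈ 𝒯 := h𝒯.frontier_subset hxbar
  have hK0 : 0 ≤ K := zero_le_one.trans hK
  have hp0 : 0 < p := zero_lt_one.trans_le hp
  refine ⟨max (C * K ^ (1 / (2 * p))) (2 * L * R), by positivity, fun x hx => ?_⟩
  set d := infDist x 𝒯
  rcases (infDist_nonneg : 0 ≤ d).eq_or_lt with hd0 | hd0
  · rw [hTz x ((h𝒯.mem_iff_infDist_zero ⟨xbar, hxbar𝒯⟩).2 hd0.symm)]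
    positivity
  have hd_le : d ≤ ‖x - xbar‖ := by
    simpa only [dist_eq_norm] using infDist_le_dist_of_mem hxbar𝒯
  have hd1 : d ≤ 1 := hd_le.trans ((mem_closedBall_iff_norm.1 hx).trans hr1)
  by_cases hnear : K * d ≤ ‖x - xbar‖ ^ p
  · have hx_ne : x ≠ xbar := by rintro rfl; rw [sub_self, norm_zero] at hd_le; linarith
    obtain ⟨y, hyB, hxy⟩ := mem_iUnion₂.1 (hcov ⟨⟨hx, hx_ne⟩, hnear⟩)
    obtain ⟨-, hρy, hTy, hrρ⟩ := hB y hyB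
    have hdy : d ≤ rr y := (infDist_le_dist_of_mem (h𝒯.frontier_subset hyB.1)).trans hxy
    calc T x ≤ 2 * L / ρ y * d := hTy x hxy
      _ ≤ 2 * L * R * d ^ (1 - s) :=
          Real.div_mul_le_mul_rpow_one_sub (by positivity) hρy hd0 hs.1.le hdy hrρ
      _ ≤ _ := Real.mul_rpow_le_mul_rpow_of_le_one (by positivity) (le_max_right _ _)
          (min_le_right _ _) hd0 hd1
  · calc T x ≤ C * ‖x - xbar‖ ^ ((1 : ℝ) / 2) := hest x hx
      _ ≤ C * (K ^ (1 / (2 * p)) * d ^ (1 / (2 * p))) := by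
          gcongr
          exact Real.rpow_half_le_of_rpow_le_mul (norm_nonneg _) hK0 hd0.le hp0 (not_le.1 hnear).le
      _ = C * K ^ (1 / (2 * p)) * d ^ (1 / (2 * p)) := (mul_assoc _ _ _).symm
      _ ≤ _ := Real.mul_rpow_le_mul_rpow_of_le_one (by positivity) (le_max_left _ _)
          (min_le_left _ _) hd0 hd1

/-- Proposition 3.4: combining the square-root estimate at `xbar` with first
order (Lipschitz-type) estimates at nearby boundary points yields a Hölder estimate
`T(x) ≤ M d(x)^{min(1/(2p), 1-s)}` in terms of the distance from the target. -/
theorem statement5 {n : ℕ} (𝒯 : Set (Euc n)) (h𝒯 : IsClosed 𝒯)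
    (xbar : Euc n) (hxbar : xbar ∈ frontier 𝒯)
    (T : Euc n → ℝ) (hT0 : ∀ x, 0 ≤ T x) (hTz : ∀ x ∈ 𝒯, T x = 0)
    (r C : ℝ) (hr : 0 < r) (hr1 : r ≤ 1) (hC : 0 < C)
    (hest : ∀ x ∈ closedBall xbar r, T x ≤ C * ‖x - xbar‖ ^ ((1 : ℝ) / 2))
    (K p : ℝ) (hK : 1 ≤ K) (hp : 1 ≤ p)
    (L R s : ℝ) (hL : 0 < L) (hR : 0 < R) (hs : s ∈ Ioc (0 : ℝ) 1)
    (rr ρ : Euc n → ℝ)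
    (hB : ∀ y ∈ frontier 𝒯 ∩ (closedBall xbar r \ {xbar}),
      0 < rr y ∧ 0 < ρ y ∧
        (∀ x ∈ closedBall y (rr y), T x ≤ 2 * L / ρ y * infDist x 𝒯) ∧
        rr y ^ s ≤ R * ρ y)
    (hcov : (closedBall xbar r \ {xbar}) ∩ {x | K * infDist x 𝒯 ≤ ‖x - xbar‖ ^ p} ⊆
      ⋃ y ∈ frontier 𝒯 ∩ (closedBall xbar r \ {xbar}), closedBall y (rr y)) :
    ∃ M : ℝ, 0 ≤ M ∧ ∀ x ∈ closedBall xbar r,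
      T x ≤ M * infDist x 𝒯 ^ min (1 / (2 * p)) (1 - s) :=
  statement5_general 𝒯 h𝒯 xbar hxbar T hTz r C hr1 hC hest K p hK hp L R s hL hR hs rr ρ hB hcov
end

section
/- Let σ : ℝⁿ → ℝ^{n×m} be of class C¹ with columns σ₁,…,σ_m, let u ∈ C²(ℝⁿ), S(x) = D(∇u σ)(x) σ(x), and let S* and Sᵉ be the symmetric and skew-symmetric parts of S. Then for all a₁, a₂ ∈ ℝᵐ, with f = σ a₁ and g = σ a₂: (i) [f,g](x)·∇u(x) = 2 Sᵉ(x) a₁ · a₂, and Sᵉ(x) has entries (Sᵉ)_{ij}(x) = ½ [σ_j,σ_i](x)·∇u(x); in particular S(x) is symmetric if and only if all Lie brackets [σ_i,σ_j](x), i,j = 1,…,m, are orthogonal to ∇u(x); (ii) the symmetric part is S*(x) = ᵗσ(x) D²u(x) σ(x) + ( ½ (Dσ_j(x) σ_i(x) + Dσ_i(x) σ_j(x)) · ∇u(x) )_{i,j=1,…,m}. -/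
open Set Filter Metric Matrix MeasureTheory Asymptotics
open scoped RealInnerProductSpace ENNReal Topology

/-!
Expanding `S = D(∇u σ) σ` by the product rule gives
`S i j = ∇u · Dσᵢ σⱼ + D²u σⱼ · σᵢ`. The Hessian term is symmetric in `i, j` (Schwarz), so it
cancels in `S - ᵗS`, leaving exactly the brackets `[σⱼ, σᵢ] · ∇u`, and it doubles in `S + ᵗS`.
The bracket of `σ a₁` and `σ a₂` is bilinear in `(a₁, a₂)`, which reduces (i) to the entrywise
identity.
-/

section Gradient

variable {F : Type*} [NormedAddCommGroup F] [InnerProductSpace ℝ F] [CompleteSpace F]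
  {u : F → ℝ} {x : F}

theorem gradient_eq_toDual_symm_comp_fderiv (u : F → ℝ) :
    gradient u = (InnerProductSpace.toDual ℝ F).symm ∘ fderiv ℝ u := rfl

theorem ContDiffAt.contDiffAt_gradient {k l : WithTop ℕ∞} (hu : ContDiffAt ℝ k u x)
    (hlk : l + 1 ≤ k) :
    ContDiffAt ℝ l (gradient u) x := by
  rw [gradient_eq_toDual_symm_comp_fderiv]
  exact (InnerProductSpace.toDual ℝ F).symm.contDiff.contDiffAt.comp x (hu.fderiv_right hlk)

theorem inner_fderiv_gradient_apply (u : F → ℝ) (x v w : F) :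
    ⟪fderiv ℝ (gradient u) x v, w⟫ = fderiv ℝ (fderiv ℝ u) x v w := by
  rw [gradient_eq_toDual_symm_comp_fderiv, LinearIsometryEquiv.comp_fderiv]
  exact InnerProductSpace.toDual_symm_apply

theorem ContDiffAt.inner_fderiv_gradient_comm (hu : ContDiffAt ℝ 2 u x) (v w : F) :
    ⟪fderiv ℝ (gradient u) x v, w⟫ = ⟪fderiv ℝ (gradient u) x w, v⟫ := by
  rw [inner_fderiv_gradient_apply, inner_fderiv_gradient_apply]
  exact (hu.isSymmSndFDerivAt (by simp)).eq v w

theorem fderiv_inner_gradient_apply {s : F → F} (hu : DifferentiableAt ℝ (gradient u) x)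
    (hs : DifferentiableAt ℝ s x) (v : F) :
    fderiv ℝ (fun y => ⟪gradient u y, s y⟫) x v =
      ⟪gradient u x, fderiv ℝ s x v⟫ + ⟪fderiv ℝ (gradient u) x v, s x⟫ := by
  rw [(hu.hasFDerivAt.inner ℝ hs.hasFDerivAt).fderiv]
  simp [fderivInnerCLM_apply]

end Gradient

theorem lieBracket_sum_smul {n : ℕ} {ι : Type*} [Fintype ι] {σ : ι → Euc n → Euc n} {x : Euc n}
    (hσ : ∀ i, DifferentiableAt ℝ (σ i) x) (a b : ι → ℝ) :
    lieBracket (fun y => ∑ i, a i • σ i y) (fun y => ∑ j, b j • σ j y) x =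
      ∑ i, ∑ j, (a i * b j) • lieBracket (σ i) (σ j) x := by
  have hcomb : ∀ c : ι → ℝ,
      fderiv ℝ (fun y => ∑ i, c i • σ i y) x = ∑ i, c i • fderiv ℝ (σ i) x := fun c =>
    (HasFDerivAt.fun_sum fun i _ => ((hσ i).hasFDerivAt).const_smul (c i)).fderiv
  simp only [lieBracket, hcomb, _root_.sum_apply, _root_.smul_apply, map_sum, map_smul, smul_sub,
    Finset.sum_sub_distrib, Finset.smul_sum, smul_smul]
  rw [Finset.sum_comm (f := fun i j => (b i * a j) • fderiv ℝ (σ j) x (σ i x))]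
  simp only [mul_comm]

theorem Matrix.sub_transpose_mulVec_dotProduct {ι : Type*} [Fintype ι] (A : Matrix ι ι ℝ)
    (a b : ι → ℝ) :
    (A - Aᵀ) *ᵥ a ⬝ᵥ b = ∑ i, ∑ j, a i * b j * (A j i - A i j) := by
  simp only [dotProduct, mulVec, Matrix.sub_apply, Matrix.transpose_apply, Finset.sum_mul]
  rw [Finset.sum_comm]
  exact Finset.sum_congr rfl fun i _ => Finset.sum_congr rfl fun j _ => by ring

section Smat

variable {n m : ℕ} {σ : Fin m → Euc n → Euc n} {u : Euc n → ℝ} {x : Euc n}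

theorem Smat_apply_eq {i : Fin m} (hu : DifferentiableAt ℝ (gradient u) x)
    (hσ : DifferentiableAt ℝ (σ i) x) (j : Fin m) :
    Smat σ u x i j =
      ⟪gradient u x, fderiv ℝ (σ i) x (σ j x)⟫ + ⟪fderiv ℝ (gradient u) x (σ j x), σ i x⟫ :=
  fderiv_inner_gradient_apply hu hσ (σ j x)

theorem Smat_sub_transpose_apply (hu : ContDiffAt ℝ 2 u x)
    (hσ : ∀ i, DifferentiableAt ℝ (σ i) x) (i j : Fin m) :
    Smat σ u x i j - Smat σ u x j i = ⟪gradient u x, lieBracket (σ j) (σ i) x⟫ := by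
  have hgrad := (hu.contDiffAt_gradient le_rfl).differentiableAt one_ne_zero
  rw [Smat_apply_eq hgrad (hσ i), Smat_apply_eq hgrad (hσ j), hu.inner_fderiv_gradient_comm (σ j x),
    lieBracket, inner_sub_right]
  ring

theorem Smat_add_transpose_apply (hu : ContDiffAt ℝ 2 u x)
    (hσ : ∀ i, DifferentiableAt ℝ (σ i) x) (i j : Fin m) :
    Smat σ u x i j + Smat σ u x j i =
      2 * ⟪σ i x, fderiv ℝ (gradient u) x (σ j x)⟫ +
        ⟪fderiv ℝ (σ j) x (σ i x) + fderiv ℝ (σ i) x (σ j x), gradient u x⟫ := by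
  have hgrad := (hu.contDiffAt_gradient le_rfl).differentiableAt one_ne_zero
  rw [Smat_apply_eq hgrad (hσ i), Smat_apply_eq hgrad (hσ j), hu.inner_fderiv_gradient_comm (σ i x),
    inner_add_left, real_inner_comm (σ i x), real_inner_comm (gradient u x),
    real_inner_comm (gradient u x)]
  ring

end Smat

/-- Lemma 4.1 (ii)-(iii): the skew-symmetric part `Sᵉ` of `S` expresses the
product of Lie brackets with `∇u`, `S` is symmetric iff all brackets `[σᵢ,σⱼ](x)` are orthogonal
to `∇u(x)`, and the symmetric part `S*` is `ᵗσ D²u σ + (½(Dσⱼσᵢ + Dσᵢσⱼ)·∇u)_{ij}`. -/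
theorem statement10 {n m : ℕ} (σ : Fin m → Euc n → Euc n) (hσ : ∀ j, ContDiff ℝ 1 (σ j))
    (u : Euc n → ℝ) (hu : ContDiff ℝ 2 u) (x : Euc n) :
    (∀ a₁ a₂ : Fin m → ℝ,
      ⟪gradient u x,
          lieBracket (fun y => ∑ j, a₁ j • σ j y) (fun y => ∑ j, a₂ j • σ j y) x⟫ =
        2 * ((2 : ℝ)⁻¹ • (Smat σ u x - (Smat σ u x)ᵀ) *ᵥ a₁ ⬝ᵥ a₂)) ∧
    (∀ i j, ((2 : ℝ)⁻¹ • (Smat σ u x - (Smat σ u x)ᵀ)) i j =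
      1 / 2 * ⟪gradient u x, lieBracket (σ j) (σ i) x⟫) ∧
    ((Smat σ u x).IsSymm ↔ ∀ i j, ⟪gradient u x, lieBracket (σ i) (σ j) x⟫ = 0) ∧
    (∀ i j, ((2 : ℝ)⁻¹ • (Smat σ u x + (Smat σ u x)ᵀ)) i j =
      ⟪σ i x, fderiv ℝ (gradient u) x (σ j x)⟫ +
        1 / 2 * ⟪fderiv ℝ (σ j) x (σ i x) + fderiv ℝ (σ i) x (σ j x), gradient u x⟫) := by
  have hσx : ∀ i, DifferentiableAt ℝ (σ i) x := fun i =>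
    (hσ i).differentiable one_ne_zero x
  have hskew := Smat_sub_transpose_apply hu.contDiffAt hσx
  refine ⟨fun a₁ a₂ => ?_, fun i j => ?_, ?_, fun i j => ?_⟩
  · rw [lieBracket_sum_smul hσx, smul_dotProduct, smul_eq_mul,
      Matrix.sub_transpose_mulVec_dotProduct]
    simp only [inner_sum, real_inner_smul_right, hskew]
    ring
  · simp only [Matrix.smul_apply, Matrix.sub_apply, Matrix.transpose_apply, hskew, smul_eq_mul]
    ring
  · simp only [Matrix.IsSymm.ext_iff, ← sub_eq_zero (a := Smat σ u x _ _), hskew]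
  · simp only [Matrix.smul_apply, Matrix.add_apply, Matrix.transpose_apply,
      Smat_add_transpose_apply hu.contDiffAt hσx, smul_eq_mul]
    ring
end

section
/- Let S be a real m×m matrix, S* = (S + ᵗS)/2, and let K be the symmetric 2m×2m block matrix K = [[S*, ᵗS],[S, S*]]. Let h(a₁,a₂) = K(a₁,a₂)·(a₁,a₂) for a₁,a₂ ∈ ℝᵐ. Then: (i) the minimum of h over B₁(0)×B₁(0) is nonpositive, since h(a,−a) = 0 for every a; (ii) every eigenvector v = (a₁,a₂) of K with nonzero eigenvalue satisfies |a₁| = |a₂|; (iii) if the minimum of h over B₁(0)×B₁(0) is negative, then the minimal eigenvalue λ of K is negative, the minimum equals 2λ, and it is attained at an eigenvector v = (a₁,a₂) of K with eigenvalue λ and |a₁| = |a₂| = 1. -/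
open Set Filter Metric Matrix MeasureTheory Asymptotics
open scoped RealInnerProductSpace ENNReal Topology

/-!
Write `v = (a, b)` and `c = a + b`. A direct computation gives `K (c, -c) = (d, d)` with
`d = ½ (S - Sᵀ) c`, and `d ⬝ c = 0` because `S - Sᵀ` is skew. This is (i), and for an eigenvector
`v` with eigenvalue `μ` the symmetry of `K` gives
`μ (|a|² - |b|²) = μ (v ⬝ (c, -c)) = v ⬝ K (c, -c) = d ⬝ c = 0`, which is (ii).
For (iii), the Rayleigh bound `h(w) ≥ λ |w|² ≥ 2λ` on `B₁(0) × B₁(0)`, with `λ` the least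
eigenvalue, is attained at a `λ`-eigenvector, which by (ii) can be scaled so that both halves are
unit vectors.
-/

namespace Matrix

open scoped ComplexOrder in
theorem IsHermitian.posSemidef_sub_smul_one {n 𝕜 : Type*} [Fintype n] [DecidableEq n] [RCLike 𝕜]
    {A : Matrix n n 𝕜} (hA : A.IsHermitian) {lam : ℝ} (h : ∀ i, lam ≤ hA.eigenvalues i) :
    (A - lam • (1 : Matrix n n 𝕜)).PosSemidef := by
  have hshift : A - lam • (1 : Matrix n n 𝕜) = Unitary.conjStarAlgAut 𝕜 _ hA.eigenvectorUnitary
      (diagonal (RCLike.ofReal ∘ (hA.eigenvalues - fun _ => lam))) := by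
    have hdiag : diagonal (RCLike.ofReal ∘ (hA.eigenvalues - fun _ => lam)) =
        diagonal (RCLike.ofReal ∘ hA.eigenvalues) - (lam : 𝕜) • (1 : Matrix n n 𝕜) := by
      ext i j
      by_cases hij : i = j <;> simp [hij, Algebra.algebraMap_eq_smul_one]
    conv_lhs => rw [hA.spectral_theorem]
    rw [hdiag, map_sub, map_smul, map_one, RCLike.real_smul_eq_coe_smul (K := 𝕜)]
  rw [hshift]
  simp [Unitary.isUnit_coe.posSemidef_star_right_conjugate_iff, posSemidef_diagonal_iff, h]

theorem IsHermitian.mul_dotProduct_self_le {n : Type*} [Fintype n] [DecidableEq n]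
    {A : Matrix n n ℝ} (hA : A.IsHermitian) {lam : ℝ} (h : ∀ i, lam ≤ hA.eigenvalues i)
    (x : n → ℝ) : lam * (x ⬝ᵥ x) ≤ A *ᵥ x ⬝ᵥ x := by
  have := (hA.posSemidef_sub_smul_one h).dotProduct_mulVec_nonneg x
  rw [sub_mulVec, smul_mulVec, one_mulVec, dotProduct_sub, dotProduct_smul, star_trivial,
    dotProduct_comm x] at this
  simpa [sub_nonneg] using this

theorem transpose_mulVec_dotProduct {ι : Type*} [Fintype ι] (M : Matrix ι ι ℝ) (x y : ι → ℝ) :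
    Mᵀ *ᵥ x ⬝ᵥ y = M *ᵥ y ⬝ᵥ x := by
  rw [mulVec_transpose, ← dotProduct_mulVec, dotProduct_comm]

theorem sub_transpose_mulVec_dotProduct_self {ι : Type*} [Fintype ι] (M : Matrix ι ι ℝ)
    (x : ι → ℝ) : (M - Mᵀ) *ᵥ x ⬝ᵥ x = 0 := by
  rw [sub_mulVec, sub_dotProduct, transpose_mulVec_dotProduct, sub_self]

theorem dotProduct_self_pos_of_ne_zero {n : Type*} [Fintype n] {v : n → ℝ} (hv : v ≠ 0) :
    0 < v ⬝ᵥ v := by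
  simpa using dotProduct_star_self_pos_iff.mpr hv

end Matrix

section SumType

variable {ι : Type*} [Fintype ι]

theorem dotProduct_self_eq_sum_sq_inl_add_sum_sq_inr (v : ι ⊕ ι → ℝ) :
    v ⬝ᵥ v = ∑ i, v (Sum.inl i) ^ 2 + ∑ i, v (Sum.inr i) ^ 2 := by
  simp only [dotProduct, Fintype.sum_sum_type, sq]

theorem exists_eigenvector_sum_sq_inl_eq_one_of_balanced {K : Matrix (ι ⊕ ι) (ι ⊕ ι) ℝ}
    {lam : ℝ} {u : ι ⊕ ι → ℝ} (hu : K *ᵥ u = lam • u) (hu0 : u ≠ 0)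
    (hbal : ∑ i, u (Sum.inl i) ^ 2 = ∑ i, u (Sum.inr i) ^ 2) :
    ∃ v : ι ⊕ ι → ℝ, K *ᵥ v = lam • v ∧
      ∑ i, v (Sum.inl i) ^ 2 = 1 ∧ ∑ i, v (Sum.inr i) ^ 2 = 1 := by
  set s := ∑ i, u (Sum.inl i) ^ 2
  have hs : 0 < s := by
    linarith [dotProduct_self_eq_sum_sq_inl_add_sum_sq_inr u, dotProduct_self_pos_of_ne_zero hu0]
  have hscale : ∀ w : ι → ℝ, ∑ i, ((√s)⁻¹ • w) i ^ 2 = (∑ i, w i ^ 2) / s := by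
    intro w
    rw [Finset.sum_div]
    congr with i
    rw [Pi.smul_apply, smul_eq_mul, mul_pow, inv_pow, Real.sq_sqrt hs.le, inv_mul_eq_div]
  refine ⟨(√s)⁻¹ • u, by rw [mulVec_smul, hu, smul_comm], ?_, ?_⟩
  · exact (hscale (u ∘ Sum.inl)).trans (div_self hs.ne')
  · refine (hscale (u ∘ Sum.inr)).trans ?_
    change (∑ i, u (Sum.inr i) ^ 2) / s = 1
    rw [← hbal, div_self hs.ne']

theorem Matrix.IsHermitian.exists_min_eigenvalue_of_isMinOn_ball_prod_ball [DecidableEq ι]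
    {K : Matrix (ι ⊕ ι) (ι ⊕ ι) ℝ} (hK : K.IsHermitian)
    (hbal : ∀ (μ : ℝ) (v : ι ⊕ ι → ℝ), μ ≠ 0 → K *ᵥ v = μ • v →
      ∑ i, v (Sum.inl i) ^ 2 = ∑ i, v (Sum.inr i) ^ 2)
    {v₀ : ι ⊕ ι → ℝ} (hv₀l : ∑ i, v₀ (Sum.inl i) ^ 2 ≤ 1) (hv₀r : ∑ i, v₀ (Sum.inr i) ^ 2 ≤ 1)
    (hneg : K *ᵥ v₀ ⬝ᵥ v₀ < 0)
    (hmin : ∀ w : ι ⊕ ι → ℝ, (∑ i, w (Sum.inl i) ^ 2 ≤ 1) → (∑ i, w (Sum.inr i) ^ 2 ≤ 1) →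
      K *ᵥ v₀ ⬝ᵥ v₀ ≤ K *ᵥ w ⬝ᵥ w) :
    ∃ lam : ℝ, lam < 0 ∧
      (∃ v ≠ 0, K *ᵥ v = lam • v) ∧
      (∀ μ : ℝ, (∃ w ≠ 0, K *ᵥ w = μ • w) → lam ≤ μ) ∧
      K *ᵥ v₀ ⬝ᵥ v₀ = 2 * lam ∧
      ∃ v : ι ⊕ ι → ℝ, K *ᵥ v = lam • v ∧
        (∑ i, v (Sum.inl i) ^ 2 = 1) ∧ (∑ i, v (Sum.inr i) ^ 2 = 1) ∧
        K *ᵥ v ⬝ᵥ v = K *ᵥ v₀ ⬝ᵥ v₀ := by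
  have : Nonempty (ι ⊕ ι) := by
    by_contra h
    rw [not_nonempty_iff] at h
    simp [dotProduct] at hneg
  obtain ⟨i₀, hi₀⟩ := Finite.exists_min hK.eigenvalues
  set lam := hK.eigenvalues i₀
  have hray := hK.mul_dotProduct_self_le hi₀
  have hlam : lam < 0 := by
    by_contra! h
    have : 0 ≤ v₀ ⬝ᵥ v₀ := by rw [dotProduct_self_eq_sum_sq_inl_add_sum_sq_inr]; positivity
    linarith [hray v₀, mul_nonneg h this]
  set u := ⇑(hK.eigenvectorBasis i₀)
  have hu : K *ᵥ u = lam • u := hK.mulVec_eigenvectorBasis i₀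
  have hu0 : u ≠ 0 := by simpa [u] using hK.eigenvectorBasis.orthonormal.ne_zero i₀
  obtain ⟨v, hKv, hvl, hvr⟩ :=
    exists_eigenvector_sum_sq_inl_eq_one_of_balanced hu hu0 (hbal lam u hlam.ne hu)
  have hKvv : K *ᵥ v ⬝ᵥ v = 2 * lam := by
    rw [hKv, smul_dotProduct, dotProduct_self_eq_sum_sq_inl_add_sum_sq_inr, hvl, hvr, smul_eq_mul]
    ring
  have hmin_eq : K *ᵥ v₀ ⬝ᵥ v₀ = 2 * lam := by
    refine le_antisymm (hKvv ▸ hmin v hvl.le hvr.le) ?_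
    have := dotProduct_self_eq_sum_sq_inl_add_sum_sq_inr v₀
    nlinarith [hray v₀]
  refine ⟨lam, hlam, ⟨u, hu0, hu⟩, ?_, hmin_eq, v, hKv, hvl, hvr, hKvv.trans hmin_eq.symm⟩
  rintro μ ⟨w, hw0, hw⟩
  have := hray w
  rw [hw, smul_dotProduct, smul_eq_mul] at this
  exact le_of_mul_le_mul_right this (dotProduct_self_pos_of_ne_zero hw0)

end SumType

section Kof

variable {m : ℕ} (S : Matrix (Fin m) (Fin m) ℝ)

theorem Kof_transpose : (Kof S)ᵀ = Kof S := by
  rw [Kof, fromBlocks_transpose, transpose_smul, transpose_add, transpose_transpose, add_comm Sᵀ]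

theorem Kof_isHermitian : (Kof S).IsHermitian := by
  rw [IsHermitian, conjTranspose_eq_transpose_of_trivial, Kof_transpose]

theorem Kof_mulVec_sumElim_neg (c : Fin m → ℝ) :
    Kof S *ᵥ Sum.elim c (-c) =
      Sum.elim ((2⁻¹ : ℝ) • ((S - Sᵀ) *ᵥ c)) ((2⁻¹ : ℝ) • ((S - Sᵀ) *ᵥ c)) := by
  rw [Kof, fromBlocks_mulVec]
  simp only [Sum.elim_comp_inl, Sum.elim_comp_inr, mulVec_neg, smul_mulVec, add_mulVec, sub_mulVec]
  congr 1 <;> module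

theorem Kof_mulVec_sumElim_neg_dotProduct (a : Fin m → ℝ) :
    Kof S *ᵥ Sum.elim a (-a) ⬝ᵥ Sum.elim a (-a) = 0 := by
  rw [Kof_mulVec_sumElim_neg, sumElim_dotProduct_sumElim, dotProduct_neg, add_neg_cancel]

theorem Kof_sum_sq_inl_eq_sum_sq_inr {μ : ℝ} {v : Fin m ⊕ Fin m → ℝ} (hμ : μ ≠ 0)
    (hv : Kof S *ᵥ v = μ • v) : ∑ i, v (Sum.inl i) ^ 2 = ∑ i, v (Sum.inr i) ^ 2 := by
  set a := v ∘ Sum.inl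
  set b := v ∘ Sum.inr
  have hv_eq : v = Sum.elim a b := (Sum.elim_comp_inl_inr v).symm
  have key : μ * (a ⬝ᵥ a - b ⬝ᵥ b) = 0 := calc
    μ * (a ⬝ᵥ a - b ⬝ᵥ b) = Kof S *ᵥ v ⬝ᵥ Sum.elim (a + b) (-(a + b)) := by
      rw [hv, smul_dotProduct, hv_eq, sumElim_dotProduct_sumElim]
      simp only [dotProduct_add, dotProduct_neg, dotProduct_comm b a, smul_eq_mul]
      ring
    _ = Kof S *ᵥ Sum.elim (a + b) (-(a + b)) ⬝ᵥ v := by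
      rw [← transpose_mulVec_dotProduct, Kof_transpose]
    _ = 0 := by
      rw [Kof_mulVec_sumElim_neg, hv_eq, sumElim_dotProduct_sumElim, ← dotProduct_add,
        smul_dotProduct, sub_transpose_mulVec_dotProduct_self, smul_zero]
  have := (mul_eq_zero.mp key).resolve_left hμ
  simpa [a, b, dotProduct, sq, sub_eq_zero] using this

end Kof

/-- Proposition 4.4: properties of the quadratic form `h` of the block
matrix `K`: (i) `h(a,-a) = 0`; (ii) eigenvectors of `K` with nonzero eigenvalue have components
of equal length; (iii) a negative minimum of `h` on `B₁(0) × B₁(0)` is `2λ`, with `λ < 0` the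
minimal eigenvalue of `K`, attained at an eigenvector `(a₁,a₂)` with `|a₁| = |a₂| = 1`. -/
theorem statement12 {m : ℕ} (S : Matrix (Fin m) (Fin m) ℝ) :
    (∀ a : Fin m → ℝ, Kof S *ᵥ Sum.elim a (-a) ⬝ᵥ Sum.elim a (-a) = 0) ∧
    (∀ (μ : ℝ) (v : Fin m ⊕ Fin m → ℝ), μ ≠ 0 → Kof S *ᵥ v = μ • v →
      ∑ i, v (Sum.inl i) ^ 2 = ∑ i, v (Sum.inr i) ^ 2) ∧
    (∀ v₀ : Fin m ⊕ Fin m → ℝ,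
      (∑ i, v₀ (Sum.inl i) ^ 2 ≤ 1) → (∑ i, v₀ (Sum.inr i) ^ 2 ≤ 1) →
      Kof S *ᵥ v₀ ⬝ᵥ v₀ < 0 →
      (∀ w : Fin m ⊕ Fin m → ℝ,
        (∑ i, w (Sum.inl i) ^ 2 ≤ 1) → (∑ i, w (Sum.inr i) ^ 2 ≤ 1) →
        Kof S *ᵥ v₀ ⬝ᵥ v₀ ≤ Kof S *ᵥ w ⬝ᵥ w) →
      ∃ lam : ℝ, lam < 0 ∧
        (∃ v ≠ 0, Kof S *ᵥ v = lam • v) ∧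
        (∀ μ : ℝ, (∃ w ≠ 0, Kof S *ᵥ w = μ • w) → lam ≤ μ) ∧
        Kof S *ᵥ v₀ ⬝ᵥ v₀ = 2 * lam ∧
        ∃ v : Fin m ⊕ Fin m → ℝ, Kof S *ᵥ v = lam • v ∧
          (∑ i, v (Sum.inl i) ^ 2 = 1) ∧ (∑ i, v (Sum.inr i) ^ 2 = 1) ∧
          Kof S *ᵥ v ⬝ᵥ v = Kof S *ᵥ v₀ ⬝ᵥ v₀) := by
  have balanced (μ : ℝ) (v : Fin m ⊕ Fin m → ℝ) (hμ : μ ≠ 0) (hv : Kof S *ᵥ v = μ • v) :=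
    Kof_sum_sq_inl_eq_sum_sq_inr S hμ hv
  exact ⟨Kof_mulVec_sumElim_neg_dotProduct S, balanced, fun _ hl hr hneg hmin =>
    (Kof_isHermitian S).exists_min_eigenvalue_of_isMinOn_ball_prod_ball balanced hl hr hneg hmin⟩
end

section
/- Let σ : ℝⁿ → ℝ^{n×m} be of class C² and u : ℝⁿ → ℝ of class C³. Let x̄ ∈ ℝⁿ be such that ∇u(x̄) ≠ 0 and ᵗσ(x̄)∇u(x̄) = 0, and suppose the matrix K(x̄) has a negative eigenvalue. Then the target 𝒯 = {x : u(x) ≤ u(x̄)} is STLA for the symmetric system ẋ_t = σ(x_t)a_t at x̄, and there exist C, δ > 0 such that the minimum time function satisfies T(x) ≤ C|x − x̄|^{1/2} for all x ∈ B_δ(x̄); moreover, if (a₁,a₂) is an eigenvector of K(x̄) with minimal eigenvalue, the controls a₁, a₂ determine two vector fields σa₁, σa₂ whose single-switch trajectories reach the target in finite time. -/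
open Set Filter Metric Matrix MeasureTheory Asymptotics
open scoped RealInnerProductSpace ENNReal Topology

/-! Follow `f = σ a` for time `t`, then `g = σ b` for time `t`. A second-order expansion of `u`
along this trajectory gives
`u(x(2t)) ≤ u(x₀) + t ⟪∇u(x₀), (f + g)(x₀)⟫ + t²/2 (H_{f,f} + 2 H_{f,g} + H_{g,g})(x̄) + o(t²)`.
The first-order term vanishes at `x̄` by tangency, so it is `O(|x₀ - x̄|)`, while for an
eigenvector `(a, b)` of `K(x̄)` with eigenvalue `λ < 0` the quadratic term is
`λ (|a|² + |b|²) < 0`. Taking `t ≍ |x₀ - x̄|^{1/2}` the negative `t²` term wins, so the target is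
reached in time `2t = O(|x₀ - x̄|^{1/2})`. -/

theorem exists_ode_solution_of_lipschitzOnWith {E : Type*} [NormedAddCommGroup E]
    [NormedSpace ℝ E] [CompleteSpace E] {F : E → E} {x₀ : E} {T C : ℝ} {L : NNReal}
    (hT : 0 ≤ T) (hC : 0 ≤ C) (hlip : LipschitzOnWith L F (closedBall x₀ (C * T)))
    (hbd : ∀ y ∈ closedBall x₀ (C * T), ‖F y‖ ≤ C) :
    ∃ x : ℝ → E, x 0 = x₀ ∧ Continuous x ∧ (∀ s, x s ∈ closedBall x₀ (C * T)) ∧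
      (∀ s ≤ 0, x s = x₀) ∧ (∀ s, T ≤ s → x s = x T) ∧
      ∀ s ∈ Ioo 0 T, HasDerivAt x (F (x s)) s := by
  have h0T : (0 : ℝ) ∈ Icc 0 T := ⟨le_rfl, hT⟩
  lift C to NNReal using hC
  have hP : IsPicardLindelof (fun _ y => F y) (⟨0, h0T⟩ : Icc (0 : ℝ) T) x₀
      ⟨C * T, mul_nonneg C.2 hT⟩ 0 C L :=
    IsPicardLindelof.of_time_independent hbd hlip (by simp [max_eq_left hT]; rfl)
  obtain ⟨α, hα⟩ := ODE.FunSpace.exists_isFixedPt_next hP (mem_closedBall_self le_rfl)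
  have hfix : ∀ s ∈ Icc (0 : ℝ) T,
      α.compProj s = ODE.picard (fun _ y => F y) 0 x₀ α.compProj s := fun s hs => by
    rw [ODE.FunSpace.compProj_of_mem hs]
    exact (congrArg (fun β : ODE.FunSpace _ _ _ _ => β.toFun ⟨s, hs⟩) hα).symm
  have hx0 : α.compProj 0 = x₀ := by rw [hfix 0 h0T, ODE.picard_apply]; simp
  refine ⟨α.compProj, hx0, α.continuous_compProj,
    fun s => ODE.FunSpace.compProj_mem_closedBall α hP.mul_max_le, fun s hs => ?_,
    fun s hs => ?_, fun s hs => ?_⟩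
  · refine Eq.trans ?_ hx0
    rw [ODE.FunSpace.compProj_apply, ODE.FunSpace.compProj_apply,
      projIcc_of_le_left _ hs, projIcc_of_le_left _ le_rfl]
  · rw [ODE.FunSpace.compProj_apply, ODE.FunSpace.compProj_apply,
      projIcc_of_right_le _ hs, projIcc_of_right_le _ le_rfl]
  · have hFc : ContinuousOn (Function.uncurry fun (_ : ℝ) y => F y)
        (Icc 0 T ×ˢ closedBall x₀ (C * T)) :=
      hlip.continuousOn.comp continuousOn_snd fun p hp => hp.2
    have hd := ODE.hasDerivWithinAt_picard_Icc h0T hFc α.continuous_compProj.continuousOn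
      (fun r _ => ODE.FunSpace.compProj_mem_closedBall α hP.mul_max_le) x₀ (Ioo_subset_Icc_self hs)
    exact ((hd.congr hfix (hfix s (Ioo_subset_Icc_self hs))).hasDerivAt
      (Icc_mem_nhds hs.1 hs.2))

theorem le_add_mul_sub_of_hasDerivAt_le {h h' : ℝ → ℝ} {a b B : ℝ} (hab : a ≤ b)
    (hc : ContinuousOn h (Icc a b)) (hd : ∀ s ∈ Ioo a b, HasDerivAt h (h' s) s)
    (hB : ∀ s ∈ Ioo a b, h' s ≤ B) : h b ≤ h a + B * (b - a) := by
  rw [← interior_Icc] at hd hB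
  have := (convex_Icc a b).image_sub_le_mul_sub_of_deriv_le hc
    (fun s hs => (hd s hs).differentiableAt.differentiableWithinAt)
    (fun s hs => (hd s hs).deriv ▸ hB s hs) a (left_mem_Icc.2 hab) b (right_mem_Icc.2 hab) hab
  linarith

theorem le_taylor_of_hasDerivAt_le {h k k' : ℝ → ℝ} {a b B : ℝ} (hab : a ≤ b)
    (hhc : ContinuousOn h (Icc a b)) (hh : ∀ s ∈ Ioo a b, HasDerivAt h (k s) s)
    (hkc : ContinuousOn k (Icc a b)) (hk : ∀ s ∈ Ioo a b, HasDerivAt k (k' s) s)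
    (hB : ∀ s ∈ Ioo a b, k' s ≤ B) :
    h b ≤ h a + k a * (b - a) + B / 2 * (b - a) ^ 2 := by
  have hk_le : ∀ s ∈ Ioo a b, k s ≤ k a + B * (s - a) := fun s hs =>
    le_add_mul_sub_of_hasDerivAt_le hs.1.le (hkc.mono (Icc_subset_Icc_right hs.2.le))
      (fun r hr => hk r ⟨hr.1, hr.2.trans hs.2⟩) (fun r hr => hB r ⟨hr.1, hr.2.trans hs.2⟩)
  have hderiv : ∀ s ∈ Ioo a b, HasDerivAt (fun s => h s - k a * s - B / 2 * (s - a) ^ 2)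
      (k s - k a - B * (s - a)) s := fun s hs => by
    have hlin : HasDerivAt (fun s => k a * s) (k a) s := by
      simpa using (hasDerivAt_id' s).const_mul (k a)
    have hsq : HasDerivAt (fun s => B / 2 * (s - a) ^ 2) (B * (s - a)) s :=
      ((((hasDerivAt_id' s).sub_const a).pow 2).const_mul (B / 2)).congr_deriv
        (by push_cast; ring)
    exact ((hh s hs).sub hlin).sub hsq
  have := le_add_mul_sub_of_hasDerivAt_le (B := 0) hab (by fun_prop) hderiv
    fun s hs => by linarith [hk_le s hs]
  linarith

theorem fderiv_apply_eq_inner_gradient {F : Type*} [NormedAddCommGroup F]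
    [InnerProductSpace ℝ F] [CompleteSpace F] (u : F → ℝ) (y w : F) :
    fderiv ℝ u y w = ⟪gradient u y, w⟫ :=
  (InnerProductSpace.toDual_symm_apply).symm

theorem contDiff_gradient {F : Type*} [NormedAddCommGroup F] [InnerProductSpace ℝ F]
    [CompleteSpace F] {u : F → ℝ} {k : WithTop ℕ∞} (hu : ContDiff ℝ (k + 1) u) :
    ContDiff ℝ k (gradient u) :=
  (InnerProductSpace.toDual ℝ F).symm.contDiff.comp (hu.fderiv_right le_rfl)

theorem ContDiff.inner_gradient {F : Type*} [NormedAddCommGroup F] [InnerProductSpace ℝ F]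
    [CompleteSpace F] {u : F → ℝ} {g : F → F} (hu : ContDiff ℝ 2 u) (hg : ContDiff ℝ 1 g) :
    ContDiff ℝ 1 fun y => ⟪gradient u y, g y⟫ :=
  (contDiff_gradient hu).inner ℝ hg

section SwitchTrajectory

variable {n : ℕ} {f g : Euc n → Euc n} {u : Euc n → ℝ}

theorem continuous_H2_s13 (hf : Continuous f) (hφ : ContDiff ℝ 1 fun y => ⟪gradient u y, g y⟫) :
    Continuous (H2 f g u) :=
  (hφ.continuous_fderiv one_ne_zero).clm_apply hf

theorem inner_gradient_le_of_H2_le (hφ : Differentiable ℝ fun y => ⟪gradient u y, g y⟫)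
    {x : ℝ → Euc n} {a b B : ℝ} (hab : a ≤ b) (hxc : ContinuousOn x (Icc a b))
    (hx : ∀ s ∈ Ioo a b, HasDerivAt x (f (x s)) s) (hB : ∀ s ∈ Ioo a b, H2 f g u (x s) ≤ B) :
    ⟪gradient u (x b), g (x b)⟫ ≤ ⟪gradient u (x a), g (x a)⟫ + B * (b - a) :=
  le_add_mul_sub_of_hasDerivAt_le hab (hφ.continuous.comp_continuousOn hxc)
    (fun s hs => (hφ (x s)).hasFDerivAt.comp_hasDerivAt s (hx s hs)) hB

theorem le_taylor_of_H2_le (hu : Differentiable ℝ u)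
    (hφ : Differentiable ℝ fun y => ⟪gradient u y, f y⟫)
    {x : ℝ → Euc n} {a b B : ℝ} (hab : a ≤ b) (hxc : ContinuousOn x (Icc a b))
    (hx : ∀ s ∈ Ioo a b, HasDerivAt x (f (x s)) s) (hB : ∀ s ∈ Ioo a b, H2 f f u (x s) ≤ B) :
    u (x b) ≤ u (x a) + ⟪gradient u (x a), f (x a)⟫ * (b - a) + B / 2 * (b - a) ^ 2 :=
  le_taylor_of_hasDerivAt_le hab (hu.continuous.comp_continuousOn hxc)
    (fun s hs => by
      simpa only [Function.comp_def, fderiv_apply_eq_inner_gradient] using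
        (hu (x s)).hasFDerivAt.comp_hasDerivAt s (hx s hs))
    (hφ.continuous.comp_continuousOn hxc)
    (fun s hs => (hφ (x s)).hasFDerivAt.comp_hasDerivAt s (hx s hs)) hB

theorem IsSwitchTraj.le_taylor (hu : Differentiable ℝ u)
    (hφf : Differentiable ℝ fun y => ⟪gradient u y, f y⟫)
    (hφg : Differentiable ℝ fun y => ⟪gradient u y, g y⟫)
    {t : ℝ} {x₀ : Euc n} {x : ℝ → Euc n} (ht : 0 ≤ t) (hx : IsSwitchTraj f g t x₀ x)
    {Bff Bfg Bgg : ℝ} (hff : ∀ s ∈ Ioo 0 t, H2 f f u (x s) ≤ Bff)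
    (hfg : ∀ s ∈ Ioo 0 t, H2 f g u (x s) ≤ Bfg) (hgg : ∀ s ∈ Ioo t (2 * t), H2 g g u (x s) ≤ Bgg) :
    u (x (2 * t)) ≤ u x₀ + (⟪gradient u x₀, f x₀⟫ + ⟪gradient u x₀, g x₀⟫) * t +
      (Bff / 2 + Bfg + Bgg / 2) * t ^ 2 := by
  obtain ⟨hx0, hxc, hxf, hxg⟩ := hx
  have ht2 : t ≤ 2 * t := by linarith
  have leg₁ := le_taylor_of_H2_le hu hφf ht (hxc.mono (Icc_subset_Icc_right ht2)) hxf hff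
  have cross := inner_gradient_le_of_H2_le hφg ht (hxc.mono (Icc_subset_Icc_right ht2)) hxf hfg
  have leg₂ := le_taylor_of_H2_le hu hφg ht2 (hxc.mono (Icc_subset_Icc_left ht)) hxg hgg
  rw [hx0] at leg₁ cross
  have hcross := mul_le_mul_of_nonneg_right cross ht
  rw [show 2 * t - t = t by ring] at leg₂
  nlinarith

theorem exists_isSwitchTraj {c : Euc n} {R C : ℝ} {Lf Lg : NNReal} (hC : 0 ≤ C)
    (hf : LipschitzOnWith Lf f (closedBall c R)) (hg : LipschitzOnWith Lg g (closedBall c R))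
    (hfC : ∀ y ∈ closedBall c R, ‖f y‖ ≤ C) (hgC : ∀ y ∈ closedBall c R, ‖g y‖ ≤ C)
    {t : ℝ} (ht : 0 ≤ t) {x₀ : Euc n} (hx₀ : dist x₀ c + 2 * C * t ≤ R) :
    ∃ x : ℝ → Euc n, IsSwitchTraj f g t x₀ x ∧ Continuous x ∧ (∀ s, x s ∈ closedBall c R) ∧
      ∀ s, 2 * t ≤ s → x s = x (2 * t) := by
  have hCt : 0 ≤ C * t := mul_nonneg hC ht
  have ball₁ : closedBall x₀ (C * t) ⊆ closedBall c R := closedBall_subset_closedBall' (by linarith)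
  obtain ⟨x₁, hx₁0, hx₁c, hx₁mem, hx₁lo, hx₁hi, hx₁d⟩ :=
    exists_ode_solution_of_lipschitzOnWith ht hC (hf.mono ball₁) fun y hy => hfC y (ball₁ hy)
  have ball₂ : closedBall (x₁ t) (C * t) ⊆ closedBall c R := closedBall_subset_closedBall' <| by
    linarith [dist_triangle (x₁ t) x₀ c, mem_closedBall.1 (hx₁mem t)]
  obtain ⟨x₂, hx₂0, hx₂c, hx₂mem, hx₂lo, hx₂hi, hx₂d⟩ :=
    exists_ode_solution_of_lipschitzOnWith ht hC (hg.mono ball₂) fun y hy => hgC y (ball₂ hy)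
  -- both legs are frozen outside their time interval, so their sum glues them together
  set x : ℝ → Euc n := fun s => x₁ s + x₂ (s - t) - x₂ 0
  have hx_lo : ∀ s ≤ t, x s = x₁ s := fun s hs => by
    simp only [x, hx₂lo (s - t) (by linarith), hx₂0, add_sub_cancel_right]
  have hx_hi : ∀ s, t ≤ s → x s = x₂ (s - t) := fun s hs => by
    simp only [x, hx₁hi s hs, hx₂0]; abel
  refine ⟨x, ⟨by simp [hx_lo 0 ht, hx₁0], by fun_prop, fun s hs => ?_, fun s hs => ?_⟩,
    by fun_prop, fun s => ?_, fun s hs => ?_⟩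
  · have hd := (hx₁d s hs).congr_of_eventuallyEq <| by
      filter_upwards [Iio_mem_nhds hs.2] with r hr using hx_lo r hr.le
    rwa [← hx_lo s hs.2.le] at hd
  · have hd := ((hx₂d (s - t) ⟨by linarith [hs.1], by linarith [hs.2]⟩).comp_sub_const s t)
      |>.congr_of_eventuallyEq <| by
        filter_upwards [Ioi_mem_nhds hs.1] with r hr using hx_hi r hr.le
    rwa [← hx_hi s hs.1.le] at hd
  · rcases le_total s t with hs | hs
    · exact hx_lo s hs ▸ ball₁ (hx₁mem s)
    · exact hx_hi s hs ▸ ball₂ (hx₂mem (s - t))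
  · rw [hx_hi s (by linarith), hx_hi (2 * t) (by linarith), show 2 * t - t = t by ring,
      hx₂hi (s - t) (by linarith)]

theorem IsSwitchTraj.le_of_lipschitzOnWith (hf : ContDiff ℝ 1 f) (hg : ContDiff ℝ 1 g)
    (hu : ContDiff ℝ 2 u) {xbar : Euc n} {ρ ε : ℝ} {M L : NNReal}
    (hH2 : ∀ y ∈ closedBall xbar ρ, H2 f f u y ≤ H2 f f u xbar + ε ∧
      H2 f g u y ≤ H2 f g u xbar + ε ∧ H2 g g u y ≤ H2 g g u xbar + ε)
    (hM : LipschitzOnWith M u (closedBall xbar ρ))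
    (hL : LipschitzOnWith L (fun y => ⟪gradient u y, f y⟫ + ⟪gradient u y, g y⟫)
      (closedBall xbar ρ))
    (htan : ⟪gradient u xbar, f xbar⟫ + ⟪gradient u xbar, g xbar⟫ = 0)
    {t : ℝ} {x₀ : Euc n} {x : ℝ → Euc n} (ht : 0 ≤ t) (hx : IsSwitchTraj f g t x₀ x)
    (hxmem : ∀ s, x s ∈ closedBall xbar ρ) :
    u (x (2 * t)) ≤ u xbar + (M + L * t) * dist x₀ xbar +
      ((H2 f f u xbar + 2 * H2 f g u xbar + H2 g g u xbar) / 2 + 2 * ε) * t ^ 2 := by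
  have hx₀ : x₀ ∈ closedBall xbar ρ := hx.1 ▸ hxmem 0
  have hxbar : xbar ∈ closedBall xbar ρ := mem_closedBall_self (dist_nonneg.trans hx₀)
  have hexp := hx.le_taylor (hu.differentiable two_ne_zero)
    ((hu.inner_gradient hf).differentiable one_ne_zero)
    ((hu.inner_gradient hg).differentiable one_ne_zero) ht
    (fun s _ => (hH2 _ (hxmem s)).1) (fun s _ => (hH2 _ (hxmem s)).2.1)
    (fun s _ => (hH2 _ (hxmem s)).2.2)
  have hu₀ := hM.le_add_mul hx₀ hxbar
  have hφ₀ := hL.le_add_mul hx₀ hxbar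
  simp only [htan, zero_add] at hφ₀
  nlinarith [mul_le_mul_of_nonneg_right hφ₀ ht]

end SwitchTrajectory

theorem exists_isSwitchTraj_sublevel {n : ℕ} {f g : Euc n → Euc n} {u : Euc n → ℝ}
    {xbar : Euc n} (hf : ContDiff ℝ 1 f) (hg : ContDiff ℝ 1 g) (hu : ContDiff ℝ 2 u)
    (htan : ⟪gradient u xbar, f xbar⟫ + ⟪gradient u xbar, g xbar⟫ = 0)
    (hneg : H2 f f u xbar + 2 * H2 f g u xbar + H2 g g u xbar < 0) :
    ∃ K > (0 : ℝ), ∃ δ > (0 : ℝ), ∀ x₀ ∈ closedBall xbar δ, ∀ t ∈ Icc 0 δ,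
      K * ‖x₀ - xbar‖ ≤ t ^ 2 → ∃ x : ℝ → Euc n, IsSwitchTraj f g t x₀ x ∧ Continuous x ∧
        (∀ s, 2 * t ≤ s → x s = x (2 * t)) ∧ u (x (2 * t)) ≤ u xbar := by
  set q := H2 f f u xbar + 2 * H2 f g u xbar + H2 g g u xbar
  have hφf := hu.inner_gradient hf
  have hφg := hu.inner_gradient hg
  have near (h : Euc n → ℝ) (hh : Continuous h) : ∀ᶠ y in 𝓝 xbar, h y ≤ h xbar + -q / 8 :=
    hh.continuousAt.eventually (ge_mem_nhds (lt_add_of_pos_right _ (by linarith)))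
  obtain ⟨ρ, hρ, hH2⟩ := Metric.nhds_basis_closedBall.eventually_iff.1 <|
    (near _ (continuous_H2_s13 hf.continuous hφf)).and <|
      (near _ (continuous_H2_s13 hf.continuous hφg)).and (near _ (continuous_H2_s13 hg.continuous hφg))
  have lip {F' : Type} [NormedAddCommGroup F'] [NormedSpace ℝ F'] (h : Euc n → F')
      (hh : ContDiff ℝ 1 h) : ∃ L, LipschitzOnWith L h (closedBall xbar ρ) :=
    hh.contDiffOn.exists_lipschitzOnWith one_ne_zero (convex_closedBall _ _)
      (isCompact_closedBall _ _)
  obtain ⟨Lf, hLf⟩ := lip f hf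
  obtain ⟨Lg, hLg⟩ := lip g hg
  obtain ⟨M, hM⟩ := lip u (hu.of_le one_le_two)
  obtain ⟨L, hL⟩ := lip _ (hφf.add hφg)
  obtain ⟨C, hC⟩ := (isCompact_closedBall xbar ρ).exists_bound_of_continuousOn
    (f := fun y => ‖f y‖ + ‖g y‖) (hf.continuous.norm.add hg.continuous.norm).continuousOn
  have hfgC : ∀ y ∈ closedBall xbar ρ, ‖f y‖ ≤ C ∧ ‖g y‖ ≤ C := fun y hy => by
    have := (le_abs_self _).trans (hC y hy)
    exact ⟨by linarith [norm_nonneg (g y)], by linarith [norm_nonneg (f y)]⟩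
  have hC0 : 0 ≤ C := (norm_nonneg _).trans (hfgC xbar (mem_closedBall_self hρ.le)).1
  obtain ⟨δ, hδ, hδρ, hδL⟩ : ∃ δ > 0, δ * (1 + 2 * C) ≤ ρ ∧ δ * (1 + L) ≤ 1 :=
    ⟨min (ρ / (1 + 2 * C)) (1 / (1 + L)), by positivity,
      (le_div_iff₀ (by positivity)).1 (min_le_left _ _),
      (le_div_iff₀ (by positivity)).1 (min_le_right _ _)⟩
  -- `K = 4 (M + 1) / -q` makes `(M + 1) |x₀ - xbar| ≤ -q t² / 4`, absorbing the first-order terms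
  refine ⟨4 * (M + 1) / -q, div_pos (by positivity) (by linarith), δ, hδ,
    fun x₀ hx₀ t ht hKt => ?_⟩
  rw [← dist_eq_norm, div_mul_eq_mul_div, div_le_iff₀ (by linarith)] at hKt
  obtain ⟨x, hx, hxc, hxmem, hxconst⟩ := exists_isSwitchTraj hC0 hLf hLg
    (fun y hy => (hfgC y hy).1) (fun y hy => (hfgC y hy).2) ht.1 (x₀ := x₀)
    (by nlinarith [ht.2, mem_closedBall.1 hx₀])
  have hexp := hx.le_of_lipschitzOnWith hf hg hu hH2 hM hL htan ht.1 hxmem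
  have hLt : L * t ≤ 1 := by nlinarith [ht.1, ht.2]
  refine ⟨x, hx, hxc, hxconst, ?_⟩
  nlinarith [mul_le_mul_of_nonneg_left hLt (dist_nonneg : 0 ≤ dist x₀ xbar)]

theorem Kof_quadratic_neg {m : ℕ} {S : Matrix (Fin m) (Fin m) ℝ} {lam : ℝ}
    {v : Fin m ⊕ Fin m → ℝ} (hlam : lam < 0) (hv : v ≠ 0) (heig : Kof S *ᵥ v = lam • v) :
    (fun i => v (Sum.inl i)) ⬝ᵥ S *ᵥ (fun i => v (Sum.inl i)) +
      2 * ((fun i => v (Sum.inr i)) ⬝ᵥ S *ᵥ (fun i => v (Sum.inl i))) +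
      (fun i => v (Sum.inr i)) ⬝ᵥ S *ᵥ (fun i => v (Sum.inr i)) < 0 := by
  obtain ⟨a, b, rfl⟩ : ∃ a b, v = Sum.elim a b := ⟨_, _, (Sum.elim_comp_inl_inr v).symm⟩
  have hvv : 0 < Sum.elim a b ⬝ᵥ Sum.elim a b := by
    simpa using (dotProduct_self_star_pos_iff.2 hv)
  have hquad := congrArg (Sum.elim a b ⬝ᵥ ·) heig
  simp only [Kof, fromBlocks_mulVec, Sum.elim_comp_inl, Sum.elim_comp_inr,
    sumElim_dotProduct_sumElim, dotProduct_smul, dotProduct_add, add_mulVec, smul_mulVec,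
    dotProduct_transpose_mulVec, smul_eq_mul] at hquad
  rw [sumElim_dotProduct_sumElim] at hvv
  change a ⬝ᵥ S *ᵥ a + 2 * (b ⬝ᵥ S *ᵥ a) + b ⬝ᵥ S *ᵥ b < 0
  nlinarith [mul_neg_of_neg_of_pos hlam hvv]

theorem exists_eigenvector_halves_le_one {m : ℕ} {M : Matrix (Fin m ⊕ Fin m) (Fin m ⊕ Fin m) ℝ}
    {lam : ℝ} {v : Fin m ⊕ Fin m → ℝ} (hv : v ≠ 0) (heig : M *ᵥ v = lam • v) :
    ∃ w ≠ 0, M *ᵥ w = lam • w ∧ ∑ i, w (Sum.inl i) ^ 2 ≤ 1 ∧ ∑ i, w (Sum.inr i) ^ 2 ≤ 1 := by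
  have hvv : 0 < v ⬝ᵥ v := by simpa using dotProduct_self_star_pos_iff.2 hv
  set c := (√(v ⬝ᵥ v))⁻¹
  have htot : ∑ i, (c • v) (Sum.inl i) ^ 2 + ∑ i, (c • v) (Sum.inr i) ^ 2 = 1 := by
    rw [← Fintype.sum_sum_type (fun p => (c • v) p ^ 2)]
    simp only [Pi.smul_apply, smul_eq_mul, mul_pow, ← Finset.mul_sum]
    rw [show ∑ p, v p ^ 2 = v ⬝ᵥ v by simp [dotProduct, sq], inv_pow, Real.sq_sqrt hvv.le,
      inv_mul_cancel₀ hvv.ne']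
  have hinl : 0 ≤ ∑ i, (c • v) (Sum.inl i) ^ 2 := by positivity
  have hinr : 0 ≤ ∑ i, (c • v) (Sum.inr i) ^ 2 := by positivity
  exact ⟨c • v, smul_ne_zero (by positivity) hv, by rw [mulVec_smul, heig, smul_comm],
    by linarith, by linarith⟩

section SymmetricSystem

variable {n m : ℕ} {σ : Fin m → Euc n → Euc n} {u : Euc n → ℝ} {xbar : Euc n}

theorem inner_gradient_sum_smul (c : Fin m → ℝ) (y : Euc n) :
    ⟪gradient u y, ∑ j, c j • σ j y⟫ = ∑ j, c j * ⟪gradient u y, σ j y⟫ := by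
  simp only [inner_sum, real_inner_smul_right]

theorem H2_sum_smul (hσ : ∀ j, Differentiable ℝ (σ j)) (hu : Differentiable ℝ (gradient u))
    (c d : Fin m → ℝ) (y : Euc n) :
    H2 (fun y => ∑ j, c j • σ j y) (fun y => ∑ j, d j • σ j y) u y = d ⬝ᵥ Smat σ u y *ᵥ c := by
  have hφ (j : Fin m) : HasFDerivAt (fun z => ⟪gradient u z, σ j z⟫)
      (fderiv ℝ (fun z => ⟪gradient u z, σ j z⟫) y) y :=
    ((hu y).inner ℝ (hσ j y)).hasFDerivAt
  simp only [H2, inner_gradient_sum_smul,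
    (HasFDerivAt.fun_sum fun j _ => (hφ j).const_mul (d j)).fderiv]
  simp only [dotProduct, mulVec, Smat, of_apply, _root_.sum_apply, _root_.smul_apply,
    map_sum, map_smul, smul_eq_mul, Finset.mul_sum]
  rw [Finset.sum_comm]
  exact Finset.sum_congr rfl fun i _ => Finset.sum_congr rfl fun j _ => by ring

theorem exists_isSwitchTraj_sublevel_of_eigen (hσ : ∀ j, ContDiff ℝ 2 (σ j))
    (hu : ContDiff ℝ 3 u) (htan : ∀ j, ⟪gradient u xbar, σ j xbar⟫ = 0) {lam : ℝ}
    {v : Fin m ⊕ Fin m → ℝ} (hlam : lam < 0) (hv : v ≠ 0) (heig : Kmat σ u xbar *ᵥ v = lam • v) :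
    ∃ K > (0 : ℝ), ∃ δ > (0 : ℝ), ∀ x₀ ∈ closedBall xbar δ, ∀ t ∈ Icc 0 δ,
      K * ‖x₀ - xbar‖ ≤ t ^ 2 → ∃ x : ℝ → Euc n,
        IsSwitchTraj (fun y => ∑ j, v (Sum.inl j) • σ j y)
          (fun y => ∑ j, v (Sum.inr j) • σ j y) t x₀ x ∧ Continuous x ∧
        (∀ s, 2 * t ≤ s → x s = x (2 * t)) ∧ u (x (2 * t)) ≤ u xbar := by
  have hσ₁ (j : Fin m) : ContDiff ℝ 1 (σ j) := (hσ j).of_le one_le_two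
  have hfield (c : Fin m → ℝ) : ContDiff ℝ 1 fun y => ∑ j, c j • σ j y := by fun_prop
  have hH2 := H2_sum_smul (u := u) (fun j => (hσ₁ j).differentiable one_ne_zero)
    ((contDiff_gradient (k := 2) hu).differentiable two_ne_zero)
  refine exists_isSwitchTraj_sublevel (hfield _) (hfield _) (hu.of_le (by norm_num))
    (by simp only [inner_gradient_sum_smul, htan, mul_zero, Finset.sum_const_zero, add_zero]) ?_
  rw [hH2, hH2, hH2]
  exact Kof_quadratic_neg hlam hv heig

end SymmetricSystem

section SwitchControl

variable {n m : ℕ}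

noncomputable def switchCtrl (A B : Euc m) (t : ℝ) : ℝ → Euc m :=
  fun s => if s < t then A else if s < 2 * t then B else 0

theorem eventually_lt_iff_of_ne {α : Type*} [LinearOrder α] [TopologicalSpace α]
    [OrderTopology α] {s t : α} (h : s ≠ t) : ∀ᶠ r in 𝓝 s, (r < t ↔ s < t) := by
  rcases h.lt_or_gt with h | h
  · filter_upwards [Iio_mem_nhds h] with r hr using iff_of_true hr h
  · filter_upwards [Ioi_mem_nhds h] with r hr using iff_of_false hr.not_gt h.not_gt

theorem piecewiseContinuous_switchCtrl (A B : Euc m) (t : ℝ) :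
    PiecewiseContinuous (switchCtrl A B t) := fun _ _ =>
  ⟨{t, 2 * t}, fun s _ hs => by
    simp only [Finset.mem_insert, Finset.mem_singleton, not_or] at hs
    refine continuousAt_const.congr (f := fun _ => switchCtrl A B t s) ?_
    filter_upwards [eventually_lt_iff_of_ne hs.1, eventually_lt_iff_of_ne hs.2] with r h₁ h₂
    simp only [switchCtrl, h₁, h₂]⟩

theorem intervalIntegrable_switchCtrl {F : Euc n → Euc m → Euc n}
    (hF : Continuous (Function.uncurry F)) {x : ℝ → Euc n} (hx : Continuous x)
    (A B : Euc m) (t a b : ℝ) :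
    IntervalIntegrable (fun s => F (x s) (switchCtrl A B t s)) volume a b := by
  have hmeas : Measurable (switchCtrl A B t) :=
    Measurable.ite measurableSet_Iio measurable_const
      (Measurable.ite measurableSet_Iio measurable_const measurable_const)
  have hcpt : IsCompact ((x '' uIcc a b) ×ˢ ({A, B, 0} : Set (Euc m))) :=
    (isCompact_uIcc.image hx).prod (Set.toFinite _).isCompact
  obtain ⟨M, hM⟩ := hcpt.exists_bound_of_continuousOn hF.continuousOn
  refine (intervalIntegrable_iff.2 <| Measure.integrableOn_of_bounded (M := M)
    measure_Ioc_lt_top.ne (hF.measurable.comp (hx.measurable.prodMk hmeas)).aestronglyMeasurable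
    ?_)
  refine (ae_restrict_iff' measurableSet_uIoc).2 (Eventually.of_forall fun s hs => ?_)
  refine hM (x s, switchCtrl A B t s) ⟨mem_image_of_mem x (uIoc_subset_uIcc hs), ?_⟩
  simp only [switchCtrl]
  split_ifs <;> simp

theorem isTraj_switchCtrl {F : Euc n → Euc m → Euc n} {U : Set (Euc m)}
    (hF : Continuous (Function.uncurry F)) (hF0 : ∀ y, F y 0 = 0) {A B : Euc m}
    (hA : A ∈ U) (hB : B ∈ U) (h0 : 0 ∈ U) {t : ℝ} {x : ℝ → Euc n}
    (hx : IsSwitchTraj (fun y => F y A) (fun y => F y B) t (x 0) x) (hxc : Continuous x)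
    (hconst : ∀ s, 2 * t ≤ s → x s = x (2 * t)) :
    IsTraj F U (switchCtrl A B t) x := by
  refine ⟨⟨fun s => ?_, piecewiseContinuous_switchCtrl A B t⟩, hxc.continuousOn, fun θ hθ => ?_⟩
  · simp only [switchCtrl]
    split_ifs <;> assumption
  rw [integral_eq_of_hasDerivAt_off_countable_of_le x _ hθ ((Set.toFinite {t, 2 * t}).countable)
    hxc.continuousOn (fun s hs => ?_) (intervalIntegrable_switchCtrl hF hxc A B t 0 θ)]
  · abel
  obtain ⟨⟨hs0, -⟩, hst⟩ := hs
  simp only [mem_insert_iff, mem_singleton_iff, not_or] at hst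
  rcases Ne.lt_or_gt hst.1 with h₁ | h₁
  · simpa [switchCtrl, h₁] using hx.2.2.1 s ⟨hs0, h₁⟩
  rcases Ne.lt_or_gt hst.2 with h₂ | h₂
  · simpa [switchCtrl, h₁.not_gt, h₂] using hx.2.2.2 s ⟨h₁, h₂⟩
  · have hc : HasDerivAt x 0 s := (hasDerivAt_const s (x (2 * t))).congr_of_eventuallyEq <| by
      filter_upwards [Ioi_mem_nhds h₂] with r hr using hconst r hr.le
    have ht : ¬ s < t := by linarith
    simpa [switchCtrl, ht, h₂.not_gt, hF0] using hc

end SwitchControl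

theorem toLp_mem_closedBall_one {m : ℕ} {a : Fin m → ℝ} (h : ∑ i, a i ^ 2 ≤ 1) :
    WithLp.toLp 2 a ∈ closedBall (0 : Euc m) 1 := by
  simpa [EuclideanSpace.norm_eq] using h

theorem minTime_le_of_mem_reachSet {n m : ℕ} {f : Euc n → Euc m → Euc n} {A : Set (Euc m)}
    {𝒯 : Set (Euc n)} {x₀ : Euc n} {T : ℝ} (h : x₀ ∈ ReachSet f A 𝒯 T) :
    minTime f A 𝒯 x₀ ≤ ENNReal.ofReal T := by
  obtain ⟨a, x, t, hx, hx0, ht0, htT, hxt⟩ := h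
  have : minTime f A 𝒯 x₀ ≤ ENNReal.ofReal t := sInf_le ⟨a, x, t, hx, hx0, ht0, hxt, rfl⟩
  exact this.trans (ENNReal.ofReal_le_ofReal htT)

theorem reachSet_mono {n m : ℕ} {f : Euc n → Euc m → Euc n} {A : Set (Euc m)}
    {𝒯 : Set (Euc n)} {T T' : ℝ} (h : T ≤ T') : ReachSet f A 𝒯 T ⊆ ReachSet f A 𝒯 T' :=
  fun _ ⟨a, x, t, hx, hx0, ht0, htT, hxt⟩ => ⟨a, x, t, hx, hx0, ht0, htT.trans h, hxt⟩

theorem exists_mem_reachSet_sqrt {n m : ℕ} {σ : Fin m → Euc n → Euc n}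
    (hσ : ∀ j, ContDiff ℝ 2 (σ j)) {u : Euc n → ℝ} (hu : ContDiff ℝ 3 u) {xbar : Euc n}
    (htan : ∀ j, ⟪gradient u xbar, σ j xbar⟫ = 0) {lam : ℝ} {v : Fin m ⊕ Fin m → ℝ}
    (hlam : lam < 0) (hv : v ≠ 0) (heig : Kmat σ u xbar *ᵥ v = lam • v) :
    ∃ K > (0 : ℝ), ∃ δ > (0 : ℝ), ∀ x₀ ∈ closedBall xbar δ,
      x₀ ∈ ReachSet (symF σ) (closedBall (0 : Euc m) 1) {x | u x ≤ u xbar}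
        (2 * √(K * ‖x₀ - xbar‖)) := by
  obtain ⟨w, hw, hweig, hinl, hinr⟩ := exists_eigenvector_halves_le_one hv heig
  obtain ⟨K, hK, δ, hδ, hreach⟩ := exists_isSwitchTraj_sublevel_of_eigen hσ hu htan hlam hw hweig
  refine ⟨K, hK, min δ (δ ^ 2 / K), by positivity, fun x₀ hx₀ => ?_⟩
  have hr : ‖x₀ - xbar‖ ≤ min δ (δ ^ 2 / K) := by rwa [← dist_eq_norm, ← mem_closedBall]
  have hKr : K * ‖x₀ - xbar‖ ≤ δ ^ 2 := (le_div_iff₀' hK).1 (hr.trans (min_le_right _ _))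
  obtain ⟨x, hx, hxc, hconst, hux⟩ := hreach x₀
    (closedBall_subset_closedBall (min_le_left _ _) hx₀) (√(K * ‖x₀ - xbar‖))
    ⟨Real.sqrt_nonneg _, Real.sqrt_le_iff.2 ⟨hδ.le, hKr⟩⟩ (Real.sq_sqrt (by positivity)).ge
  have hcont : Continuous (Function.uncurry (symF σ)) := by
    have := fun j => (hσ j).continuous
    unfold symF
    fun_prop
  refine ⟨_, x, _, isTraj_switchCtrl hcont (fun y => by simp [symF]) (toLp_mem_closedBall_one hinl)
    (toLp_mem_closedBall_one hinr) (mem_closedBall_self zero_le_one) (hx.1 ▸ hx) hxc hconst,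
    hx.1, by positivity, le_rfl, hux⟩

theorem statement13_general {n m : ℕ} (σ : Fin m → Euc n → Euc n) (hσ : ∀ j, ContDiff ℝ 2 (σ j))
    (u : Euc n → ℝ) (hu : ContDiff ℝ 3 u) (xbar : Euc n)
    (htan : ∀ j, ⟪gradient u xbar, σ j xbar⟫ = 0)
    (hK : ∃ lam < (0 : ℝ), ∃ v ≠ 0, Kmat σ u xbar *ᵥ v = lam • v) :
    STLA (symF σ) (closedBall (0 : Euc m) 1) {x | u x ≤ u xbar} xbar ∧
    (∃ C > (0 : ℝ), ∃ δ > (0 : ℝ), ∀ x ∈ closedBall xbar δ,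
      minTime (symF σ) (closedBall (0 : Euc m) 1) {x | u x ≤ u xbar} x ≤
        ENNReal.ofReal (C * ‖x - xbar‖ ^ ((1 : ℝ) / 2))) ∧
    (∀ (lam : ℝ) (v : Fin m ⊕ Fin m → ℝ), v ≠ 0 →
      Kmat σ u xbar *ᵥ v = lam • v →
      (∀ μ : ℝ, (∃ w ≠ 0, Kmat σ u xbar *ᵥ w = μ • w) → lam ≤ μ) →
      (∑ i, v (Sum.inl i) ^ 2 ≤ 1) → (∑ i, v (Sum.inr i) ^ 2 ≤ 1) →
      ∃ δ > (0 : ℝ), ∀ x₀ ∈ closedBall xbar δ, ∃ t > (0 : ℝ), ∃ x : ℝ → Euc n,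
        IsSwitchTraj (fun y => ∑ j, v (Sum.inl j) • σ j y)
          (fun y => ∑ j, v (Sum.inr j) • σ j y) t x₀ x ∧
        u (x (2 * t)) ≤ u xbar) := by
  obtain ⟨lam₀, hlam₀, v₀, hv₀, heig₀⟩ := hK
  obtain ⟨K, hK, δ, hδ, hreach⟩ := exists_mem_reachSet_sqrt hσ hu htan hlam₀ hv₀ heig₀
  refine ⟨fun T hT => ?_, ⟨2 * √K, by positivity, δ, hδ, fun x hx => ?_⟩,
    fun lam v hv heig hmin _ _ => ?_⟩
  · refine mem_interior.2 ⟨ball xbar (min δ (T ^ 2 / (4 * K))), fun x hx => ?_, isOpen_ball,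
      mem_ball_self (by positivity)⟩
    have hr : ‖x - xbar‖ ≤ T ^ 2 / (4 * K) := by
      rw [← dist_eq_norm]; exact (mem_ball.1 hx).le.trans (min_le_right _ _)
    refine reachSet_mono ?_
      (hreach x (ball_subset_closedBall (ball_subset_ball (min_le_left _ _) hx)))
    have hKr := (le_div_iff₀' (by positivity)).1 hr
    linarith [show √(K * ‖x - xbar‖) ≤ T / 2 from Real.sqrt_le_iff.2 ⟨by positivity, by nlinarith⟩]
  · rw [← Real.sqrt_eq_rpow, mul_assoc, ← Real.sqrt_mul hK.le]
    exact minTime_le_of_mem_reachSet (hreach x hx)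
  · obtain ⟨K', hK', δ', hδ', h⟩ := exists_isSwitchTraj_sublevel_of_eigen hσ hu htan
      ((hmin lam₀ ⟨v₀, hv₀, heig₀⟩).trans_lt hlam₀) hv heig
    refine ⟨min δ' (δ' ^ 2 / K'), by positivity, fun x₀ hx₀ => ?_⟩
    have hr : ‖x₀ - xbar‖ ≤ min δ' (δ' ^ 2 / K') := by rwa [← dist_eq_norm, ← mem_closedBall]
    obtain ⟨x, hx, -, -, hux⟩ := h x₀ (closedBall_subset_closedBall (min_le_left _ _) hx₀) δ'
      ⟨hδ'.le, le_rfl⟩ ((le_div_iff₀' hK').1 (hr.trans (min_le_right _ _)))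
    exact ⟨δ', hδ', x, hx, hux⟩

/-- Theorem 4.5: for a symmetric system, if all vector fields are tangent at
`xbar` and `K(xbar)` has a negative eigenvalue, then the target `{u ≤ u(xbar)}` is STLA at
`xbar`, `T(x) ≤ C|x - xbar|^{1/2}` near `xbar`, and the coordinates of an eigenvector with
minimal eigenvalue give two controls whose single-switch trajectories reach the target in
finite time. -/
theorem statement13 {n m : ℕ} (σ : Fin m → Euc n → Euc n) (hσ : ∀ j, ContDiff ℝ 2 (σ j))
    (u : Euc n → ℝ) (hu : ContDiff ℝ 3 u) (xbar : Euc n)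
    (hgrad : gradient u xbar ≠ 0)
    (htan : ∀ j, ⟪gradient u xbar, σ j xbar⟫ = 0)
    (hK : ∃ lam < (0 : ℝ), ∃ v ≠ 0, Kmat σ u xbar *ᵥ v = lam • v) :
    STLA (symF σ) (closedBall (0 : Euc m) 1) {x | u x ≤ u xbar} xbar ∧
    (∃ C > (0 : ℝ), ∃ δ > (0 : ℝ), ∀ x ∈ closedBall xbar δ,
      minTime (symF σ) (closedBall (0 : Euc m) 1) {x | u x ≤ u xbar} x ≤
        ENNReal.ofReal (C * ‖x - xbar‖ ^ ((1 : ℝ) / 2))) ∧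
    (∀ (lam : ℝ) (v : Fin m ⊕ Fin m → ℝ), v ≠ 0 →
      Kmat σ u xbar *ᵥ v = lam • v →
      (∀ μ : ℝ, (∃ w ≠ 0, Kmat σ u xbar *ᵥ w = μ • w) → lam ≤ μ) →
      (∑ i, v (Sum.inl i) ^ 2 ≤ 1) → (∑ i, v (Sum.inr i) ^ 2 ≤ 1) →
      ∃ δ > (0 : ℝ), ∀ x₀ ∈ closedBall xbar δ, ∃ t > (0 : ℝ), ∃ x : ℝ → Euc n,
        IsSwitchTraj (fun y => ∑ j, v (Sum.inl j) • σ j y)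
          (fun y => ∑ j, v (Sum.inr j) • σ j y) t x₀ x ∧
        u (x (2 * t)) ≤ u xbar) :=
  statement13_general σ hσ u hu xbar htan hK
end
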